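/- arXiv:1808.09908 — 2 statements merged into one kernel-verified Lean document; each statement's English description precedes it below -/
import Mathlib

section
/- For integers n ≥ d ≥ 2, the hypergraph zero forcing number of the complete d-uniform hypergraph on n vertices satisfies Z₀(K_n^{(d)}) = n − d. -/
/-! Common definitions: hypermatrices, hypergraphs, zero forcing, infection,
power domination zero forcing. -/

/-- A `d`-hypermatrix of dimension `n` over `F` is symmetric if its entries are
invariant under permutations of the indices. -/
def HMSymmetric {F : Type*} {n d : ℕ} (A : (Fin d → Fin n) → F) : Prop :=
  ∀ (i : Fin d → Fin n) (π : Equiv.Perm (Fin d)), A (i ∘ π) = A i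

/-- The space of null vectors of a `d`-hypermatrix: `x` is a null vector if
`∑ j, a_{i₁ ⋯ i_{d-1} j} x_j = 0` for every choice of indices `i₁, …, i_{d-1}`
(the last index is summed against `x`). -/
def nullSpace {F : Type*} [Field F] {n d : ℕ} (A : (Fin d → Fin n) → F) :
    Submodule F (Fin n → F) where
  carrier := {x | ∀ i : Fin d → Fin n,
    ∑ j : Fin n, A (fun k => if (k : ℕ) = d - 1 then j else i k) * x j = 0}
  add_mem' := by
    intro a b ha hb i
    simp only [Set.mem_setOf_eq] at ha hb
    simp only [Set.mem_setOf_eq, Pi.add_apply, mul_add, Finset.sum_add_distrib, ha i, hb i,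
      add_zero]
  zero_mem' := by
    intro i
    simp
  smul_mem' := by
    intro c x hx i
    simp only [Set.mem_setOf_eq] at hx
    simp only [Set.mem_setOf_eq, Pi.smul_apply, smul_eq_mul]
    have h : ∑ j : Fin n, A (fun k => if (k : ℕ) = d - 1 then j else i k) * (c * x j)
        = c * ∑ j : Fin n, A (fun k => if (k : ℕ) = d - 1 then j else i k) * x j := by
      rw [Finset.mul_sum]
      exact Finset.sum_congr rfl (fun j _ => by ring)
    rw [h, hx i, mul_zero]

/-- The nullity of a hypermatrix is the dimension of its space of null vectors. -/
noncomputable def hmNullity (F : Type*) [Field F] {n d : ℕ}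
    (A : (Fin d → Fin n) → F) : ℕ :=
  Module.finrank F (nullSpace A)

/-- A hypergraph on vertex type `V`: a set of hyperedges, each a finite set of
vertices. -/
structure ZFHypergraph (V : Type*) where
  edges : Set (Finset V)

/-- A hypergraph is `d`-uniform if every edge has exactly `d` vertices. -/
def ZFHypergraph.IsUniform {V : Type*} (H : ZFHypergraph V) (d : ℕ) : Prop :=
  ∀ e ∈ H.edges, e.card = d

/-- A hypercubical `d`-hypermatrix is graphical if it is symmetric and the entries
indexed by non-distinct indices vanish. -/
def Graphical {F : Type*} [Field F] {n d : ℕ} (A : (Fin d → Fin n) → F) : Prop :=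
  HMSymmetric A ∧ ∀ i : Fin d → Fin n, ¬ Function.Injective i → A i = 0

/-- The hypergraph of a graphical `d`-hypermatrix: edges are the (distinct) index
sets of nonzero entries. -/
def hypergraphOf {F : Type*} [Field F] {n d : ℕ} (A : (Fin d → Fin n) → F) :
    ZFHypergraph (Fin n) :=
  ⟨{e | ∃ i : Fin d → Fin n, Function.Injective i ∧ Finset.image i Finset.univ = e ∧ A i ≠ 0}⟩

/-- `A ∈ S(H)`: `A` is graphical and its hypergraph is `H`. -/
def InSFam {F : Type*} [Field F] {n d : ℕ} (H : ZFHypergraph (Fin n))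
    (A : (Fin d → Fin n) → F) : Prop :=
  Graphical A ∧ hypergraphOf A = H

/-- The maximum nullity `M(H)` of a `d`-uniform hypergraph `H` over the field `F`. -/
noncomputable def maxNullity (F : Type*) [Field F] {n : ℕ} (d : ℕ)
    (H : ZFHypergraph (Fin n)) : ℕ :=
  sSup {k | ∃ A : (Fin d → Fin n) → F, InSFam H A ∧ hmNullity F A = k}

/-- One application of the hypergraph color change rule: a set `S` of `d-1`
distinct vertices forces the white vertex `w` (i.e. `S ∪ {w}` is an edge and
`S ∪ {u}` being an edge for a white `u` implies `u = w`), turning the blue set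
`B` into `B'`. -/
def ZFStep {V : Type*} [DecidableEq V] (H : ZFHypergraph V) (d : ℕ) (B B' : Set V) : Prop :=
  ∃ (S : Finset V) (w : V), S.card = d - 1 ∧ w ∉ S ∧ w ∉ B ∧
    insert w S ∈ H.edges ∧
    (∀ u : V, u ∉ B → insert u S ∈ H.edges → u = w) ∧
    B' = insert w B

/-- `B` is a hypergraph zero forcing set: starting from blue set `B`, repeated
applications of the hypergraph color change rule color every vertex blue. -/
def IsZFSet {V : Type*} [DecidableEq V] (H : ZFHypergraph V) (d : ℕ) (B : Set V) : Prop :=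
  Relation.ReflTransGen (ZFStep H d) B Set.univ

/-- The hypergraph zero forcing number `Z₀(H)`: the minimum cardinality of a
hypergraph zero forcing set. -/
noncomputable def Z0 {V : Type*} [DecidableEq V] (H : ZFHypergraph V) (d : ℕ) : ℕ :=
  sInf {k | ∃ B : Finset V, B.card = k ∧ IsZFSet H d (↑B : Set V)}

/-- One application of the infection rule: a nonempty set `S` of infected vertices
contained in an edge `e`, such that for every uninfected `u ∉ e` the set `S ∪ {u}`
is contained in no edge, infects all of `e`. -/
def InfStep {V : Type*} [DecidableEq V] (H : ZFHypergraph V) (B B' : Set V) : Prop :=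
  ∃ (S e : Finset V), e ∈ H.edges ∧ S.Nonempty ∧ (↑S : Set V) ⊆ B ∧ S ⊆ e ∧
    (∀ u : V, u ∉ B → u ∉ e → ∀ e' ∈ H.edges, ¬ insert u S ⊆ e') ∧
    B' = B ∪ (↑e : Set V)

/-- `B` is an infection set: starting from `B` infected, repeated applications of
the infection rule infect every vertex. -/
def IsInfectionSet {V : Type*} [DecidableEq V] (H : ZFHypergraph V) (B : Set V) : Prop :=
  Relation.ReflTransGen (InfStep H) B Set.univ

/-- The infection number `I(H)`. -/
noncomputable def infNum {V : Type*} [DecidableEq V] (H : ZFHypergraph V) : ℕ :=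
  sInf {k | ∃ B : Finset V, B.card = k ∧ IsInfectionSet H (↑B : Set V)}

/-- `w` is a neighbor of `v` if some edge contains both (and `v ≠ w`). -/
def ZFHypergraph.Neighbor {V : Type*} (H : ZFHypergraph V) (v w : V) : Prop :=
  v ≠ w ∧ ∃ e ∈ H.edges, v ∈ e ∧ w ∈ e

/-- One application of the power domination color change rule: if all white
neighbors of a blue vertex `v` lie in a single edge containing `v`, they all
become blue. -/
def PDStep {V : Type*} (H : ZFHypergraph V) (B B' : Set V) : Prop :=
  ∃ v ∈ B, ∃ e ∈ H.edges, v ∈ e ∧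
    (∀ w : V, H.Neighbor v w → w ∉ B → w ∈ e) ∧
    B' = B ∪ {w | H.Neighbor v w ∧ w ∉ B}

/-- `B` is a power domination zero forcing set. -/
def IsPDZFSet {V : Type*} (H : ZFHypergraph V) (B : Set V) : Prop :=
  Relation.ReflTransGen (PDStep H) B Set.univ

/-- The power domination zero forcing number `Zpd(H)`. -/
noncomputable def Zpd {V : Type*} (H : ZFHypergraph V) : ℕ :=
  sInf {k | ∃ B : Finset V, B.card = k ∧ IsPDZFSet H (↑B : Set V)}

/-- The complete `d`-uniform hypergraph on `Fin n`: all `d`-element subsets. -/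
def completeHG (n d : ℕ) : ZFHypergraph (Fin n) :=
  ⟨{e : Finset (Fin n) | e.card = d}⟩

/-- Two vertices are linked if some edge contains both. -/
def ZFHypergraph.Linked {V : Type*} (H : ZFHypergraph V) (a b : V) : Prop :=
  ∃ e ∈ H.edges, a ∈ e ∧ b ∈ e

/-- A hypergraph is connected if any two vertices are joined by a path. -/
def ZFHypergraph.Connected {V : Type*} (H : ZFHypergraph V) : Prop :=
  ∀ u v : V, Relation.ReflTransGen H.Linked u v

/-- The connected component of a vertex `v`. -/
def componentSet {V : Type*} (H : ZFHypergraph V) (v : V) : Set V :=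
  {u | Relation.ReflTransGen H.Linked v u}

/-- A vertex is isolated if it belongs to no edge. -/
def ZFHypergraph.IsIsolated {V : Type*} (H : ZFHypergraph V) (v : V) : Prop :=
  ∀ e ∈ H.edges, v ∉ e

/-- An interval `d`-uniform hypergraph on `Fin n` (vertices numbered `0,…,n-1`):
every edge consists of `d` consecutive vertices `{ℓ, ℓ+1, …, ℓ+d-1}`. -/
def IsIntervalHG {n : ℕ} (H : ZFHypergraph (Fin n)) (d : ℕ) : Prop :=
  ∀ e ∈ H.edges, ∃ ℓ : ℕ, e.image Fin.val = Finset.Ico ℓ (ℓ + d)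

/-- The edge set of the special interval hypergraph `SI(d,s)` on vertices
`0,…,sd` (0-indexed): left endpoints `(i-1)d` and `(i-1)d+1` for `i = 1,…,s`. -/
def siEdges (n d s : ℕ) : Set (Finset (Fin n)) :=
  {e | ∃ i < s, e.image Fin.val = Finset.Ico (i * d) (i * d + d) ∨
       e.image Fin.val = Finset.Ico (i * d + 1) (i * d + 1 + d)}

/-- The component of `H` induced on `U` is (a copy of) the special interval
hypergraph `SI(d,s)` for some `s ≥ 1`: the vertices of `U` are `sd+1` consecutive
integers starting at `a`, and the edges of `H` contained in `U` are exactly the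
shifted special-interval edges. -/
def IsSIComponent {n : ℕ} (H : ZFHypergraph (Fin n)) (d : ℕ) (U : Set (Fin n)) : Prop :=
  ∃ a s : ℕ, 1 ≤ s ∧ Fin.val '' U = Set.Ico a (a + s * d + 1) ∧
    ∀ e : Finset (Fin n),
      (e ∈ H.edges ∧ (↑e : Set (Fin n)) ⊆ U) ↔
      ∃ i < s, e.image Fin.val = Finset.Ico (a + i * d) (a + i * d + d) ∨
               e.image Fin.val = Finset.Ico (a + i * d + 1) (a + i * d + 1 + d)

/-- The set of values `{ℓ, ℓ+1, …, ℓ+d-1}` taken modulo `n` (a circular arc). -/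
def arcEdge (n d ℓ : ℕ) : Finset ℕ :=
  (Finset.range d).image (fun k => (ℓ + k) % n)

/-- The edge set of the special circular-arc hypergraph `SCA(d,s)` on `n = sd`
vertices (0-indexed): first endpoints `(i-1)d` and `(i-1)d+1` for `i = 1,…,s`. -/
def scaEdges (n d s : ℕ) : Set (Finset (Fin n)) :=
  {e | ∃ i < s, e.image Fin.val = arcEdge n d (i * d) ∨
       e.image Fin.val = arcEdge n d (i * d + 1)}

/-- The `t`-tight circular-arc `d`-hypergraph on `d+1` vertices: edges are the
arcs of length `d` with first endpoints `(i-1)(d-t)` (0-indexed) for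
`i = 1, …, (d+1)/(d-t)`. -/
def tightCA (d t : ℕ) : ZFHypergraph (Fin (d + 1)) :=
  ⟨{e | ∃ i < (d + 1) / (d - t), e.image Fin.val = arcEdge (d + 1) d (i * (d - t))}⟩

/-- Edge deletion `H - e`. -/
def deleteEdge {V : Type*} (H : ZFHypergraph V) (e : Finset V) : ZFHypergraph V :=
  ⟨H.edges \ {e}⟩

/-- Vertex deletion `H - v`: the vertex set becomes `{u // u ≠ v}` and the edges
are the edges of `H` not containing `v`. -/
def deleteVertex {V : Type*} [DecidableEq V] (H : ZFHypergraph V) (v : V) : ZFHypergraph {u : V // u ≠ v} :=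
  ⟨{e | e.image Subtype.val ∈ H.edges}⟩

/-- The Cartesian product of hypergraphs. -/
def cartProd {V V' : Type*} [DecidableEq V] [DecidableEq V']
    (H : ZFHypergraph V) (H' : ZFHypergraph V') : ZFHypergraph (V × V') :=
  ⟨{E | (∃ e ∈ H.edges, ∃ v' : V', E = e ×ˢ ({v'} : Finset V')) ∨
        (∃ v : V, ∃ e' ∈ H'.edges, E = ({v} : Finset V) ×ˢ e')}⟩

lemma completeHG_mem {n d : ℕ} (e : Finset (Fin n)) :
    e ∈ (completeHG n d).edges ↔ e.card = d := Iff.rfl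

/-- If there are at least `d+1` white vertices, no force is possible. -/
lemma no_step_of_many_whites {n d : ℕ} (hd : 2 ≤ d) {B B' : Set (Fin n)}
    (hB : d + 1 ≤ Bᶜ.ncard) : ¬ ZFStep (completeHG n d) d B B' := by
  rintro ⟨S, w, hScard, hwS, hwB, hedge, huniq, rfl⟩
  have hdiff : 2 ≤ (Bᶜ \ (↑S : Set (Fin n))).ncard := by
    have h2 : (↑S : Set (Fin n)).ncard = d - 1 := by
      rw [Set.ncard_coe_finset]; exact hScard
    have h1 : Bᶜ.ncard ≤ (Bᶜ \ (↑S : Set (Fin n))).ncard + (d - 1) := by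
      rw [← h2]
      exact Set.ncard_le_ncard_diff_add_ncard Bᶜ (↑S : Set (Fin n)) (Set.toFinite _)
    omega
  obtain ⟨a, b, ha, hb, hab⟩ := (Set.one_lt_ncard_iff (s := Bᶜ \ (↑S : Set (Fin n))) (Set.toFinite _)).mp (by omega)
  have key : ∀ c : Fin n, c ∈ Bᶜ \ (↑S : Set (Fin n)) → c = w := by
    intro c hc
    refine huniq c hc.1 ?_
    rw [completeHG_mem, Finset.card_insert_of_notMem (by simpa using hc.2), hScard]
    omega
  exact hab ((key a ha).trans (key b hb).symm)

/-- If there are at most `d` white vertices, `B` is a zero forcing set. -/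
lemma isZFSet_of_few_whites {n d : ℕ} (hd : 2 ≤ d) (hn : d ≤ n) :
    ∀ m : ℕ, m ≤ d → ∀ B : Set (Fin n), Bᶜ.ncard = m →
      IsZFSet (completeHG n d) d B := by
  intro m
  induction m with
  | zero =>
    intro _ B hB
    have : Bᶜ = ∅ := (Set.ncard_eq_zero (Set.toFinite _)).mp hB
    have : B = Set.univ := by
      rw [← compl_compl B, this, Set.compl_empty]
    rw [this]
    exact Relation.ReflTransGen.refl
  | succ k ih =>
    intro hk B hB
    have hWfin : Bᶜ.Finite := Set.toFinite _
    have hWne : Bᶜ.Nonempty := by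
      rw [Set.nonempty_iff_ne_empty]
      intro h; rw [h, Set.ncard_empty] at hB; omega
    obtain ⟨w, hw⟩ := hWne
    set W : Finset (Fin n) := hWfin.toFinset with hWdef
    have hWcard : W.card = k + 1 := by
      rw [← Set.ncard_eq_toFinset_card _ hWfin]; exact hB
    have hwW : w ∈ W := hWfin.mem_toFinset.mpr hw
    -- build the forcing set S
    have hsub : W.erase w ⊆ Finset.univ.erase w := by
      intro x hx
      rcases Finset.mem_erase.mp hx with ⟨hx1, _⟩
      exact Finset.mem_erase.mpr ⟨hx1, Finset.mem_univ x⟩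
    have hc1 : (W.erase w).card ≤ d - 1 := by
      rw [Finset.card_erase_of_mem hwW, hWcard]; omega
    have hc2 : d - 1 ≤ (Finset.univ.erase w : Finset (Fin n)).card := by
      rw [Finset.card_erase_of_mem (Finset.mem_univ w), Finset.card_univ, Fintype.card_fin]
      omega
    obtain ⟨S, hS1, hS2, hS3⟩ := Finset.exists_subsuperset_card_eq hsub hc1 hc2
    have hwS : w ∉ S := fun h => (Finset.mem_erase.mp (hS2 h)).1 rfl
    have hstep : ZFStep (completeHG n d) d B (insert w B) := by
      refine ⟨S, w, hS3, hwS, hw, ?_, ?_, rfl⟩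
      · rw [completeHG_mem, Finset.card_insert_of_notMem hwS, hS3]; omega
      · intro u hu hedge
        have huS : u ∉ S := by
          intro huS
          rw [completeHG_mem, Finset.insert_eq_self.mpr huS, hS3] at hedge
          omega
        have huW : u ∈ W := hWfin.mem_toFinset.mpr hu
        by_contra hne
        exact huS (hS1 (Finset.mem_erase.mpr ⟨hne, huW⟩))
    have hnext : (insert w B)ᶜ.ncard = k := by
      have : (insert w B)ᶜ = Bᶜ \ {w} := by
        rw [Set.insert_eq, Set.compl_union]
        ext x; simp [Set.mem_diff, and_comm]
      rw [this, Set.ncard_diff_singleton_of_mem hw, hB]; omega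
    exact Relation.ReflTransGen.head hstep (ih (by omega) _ hnext)

theorem stmt5 {n d : ℕ} (hd : 2 ≤ d) (hn : d ≤ n) :
    Z0 (completeHG n d) d = n - d := by
  have hcardFin : Nat.card (Fin n) = n := by simp
  -- the white set of the witness: the first d vertices
  set W : Set (Fin n) := {i : Fin n | (i : ℕ) < d} with hWdef
  have hWim : W = (Fin.castLE hn) '' Set.univ := by
    ext i
    constructor
    · intro hi
      exact ⟨⟨(i : ℕ), hi⟩, Set.mem_univ _, by ext; simp⟩
    · rintro ⟨j, -, rfl⟩
      exact j.isLt
  have hWncard : W.ncard = d := by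
    rw [hWim, Set.ncard_image_of_injective _ (Fin.castLE_injective hn),
      Set.ncard_univ, Nat.card_eq_fintype_card, Fintype.card_fin]
  have hWc : Wᶜ.ncard = n - d := by
    have := Set.ncard_add_ncard_compl W (Set.toFinite _) (Set.toFinite _)
    rw [hcardFin, hWncard] at this; omega
  have hmem : n - d ∈ {k | ∃ B : Finset (Fin n), B.card = k ∧
      IsZFSet (completeHG n d) d (↑B : Set (Fin n))} := by
    refine ⟨(Set.toFinite Wᶜ).toFinset, ?_, ?_⟩
    · rw [← Set.ncard_eq_toFinset_card _ (Set.toFinite Wᶜ)]; exact hWc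
    · have hcoe : ((Set.toFinite Wᶜ).toFinset : Set (Fin n)) = Wᶜ :=
        Set.Finite.coe_toFinset _
      rw [hcoe]
      exact isZFSet_of_few_whites hd hn d le_rfl Wᶜ (by rw [compl_compl]; exact hWncard)
  refine le_antisymm (Nat.sInf_le hmem) (le_csInf ⟨_, hmem⟩ ?_)
  rintro k ⟨B, hBcard, hBzf⟩
  by_contra hlt
  push_neg at hlt
  have hcompl : d + 1 ≤ ((↑B : Set (Fin n))ᶜ).ncard := by
    have := Set.ncard_add_ncard_compl (↑B : Set (Fin n)) (Set.toFinite _) (Set.toFinite _)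
    rw [hcardFin, Set.ncard_coe_finset, hBcard] at this
    omega
  rcases Relation.ReflTransGen.cases_head hBzf with huniv | ⟨B', hstep, _⟩
  · rw [huniv] at hcompl
    simp at hcompl
  · exact no_step_of_many_whites hd hcompl hstep
end

section
/- Let d ≥ 3 and let H be an interval d-uniform hypergraph (not necessarily connected) over any field F. Let c₁ be the number of isolated vertices of H and let c₂ be the number of connected component hypergraphs of H that are equal to a special interval hypergraph SI(d, s) for some s ≥ 1. Then M(H) = Z₀(H) = c₁ + c₂. -/
/-! ### Auxiliary: interval finsets in `Fin n` -/

noncomputable def fIv (n a b : ℕ) : Finset (Fin n) :=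
  Finset.univ.filter fun x => a ≤ x.val ∧ x.val < b

lemma mem_fIv {n a b : ℕ} {x : Fin n} : x ∈ fIv n a b ↔ a ≤ x.val ∧ x.val < b := by
  simp [fIv]

lemma image_fIv {n a b : ℕ} (h : b ≤ n) :
    (fIv n a b).image Fin.val = Finset.Ico a b := by
  ext y
  simp only [Finset.mem_image, Finset.mem_Ico]
  constructor
  · rintro ⟨x, hx, rfl⟩; exact mem_fIv.1 hx
  · rintro ⟨h1, h2⟩
    exact ⟨⟨y, lt_of_lt_of_le h2 h⟩, mem_fIv.2 ⟨h1, h2⟩, rfl⟩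

lemma card_fIv {n a b : ℕ} (h : b ≤ n) : (fIv n a b).card = b - a := by
  rw [← Nat.card_Ico a b, ← image_fIv h]
  exact (Finset.card_image_of_injective _ Fin.val_injective).symm

lemma eq_fIv_of_image {n a b : ℕ} {e : Finset (Fin n)}
    (h : e.image Fin.val = Finset.Ico a b) : e = fIv n a b := by
  ext x
  rw [mem_fIv]
  constructor
  · intro hx
    have : x.val ∈ e.image Fin.val := Finset.mem_image_of_mem _ hx
    rw [h, Finset.mem_Ico] at this; exact this
  · intro hx
    have : x.val ∈ e.image Fin.val := by rw [h, Finset.mem_Ico]; exact hx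
    rcases Finset.mem_image.1 this with ⟨y, hy, hyx⟩
    rwa [← Fin.val_injective hyx]

/-! ### Interval hypergraph basics -/

/-- `ℓ` is a left endpoint of an edge of `H`. -/
def inL {n : ℕ} (H : ZFHypergraph (Fin n)) (d ℓ : ℕ) : Prop :=
  ℓ + d ≤ n ∧ fIv n ℓ (ℓ + d) ∈ H.edges

lemma edge_shape {n d : ℕ} {H : ZFHypergraph (Fin n)} (hint : IsIntervalHG H d)
    (hd : 1 ≤ d) {e : Finset (Fin n)} (he : e ∈ H.edges) :
    ∃ ℓ, inL H d ℓ ∧ e = fIv n ℓ (ℓ + d) := by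
  obtain ⟨ℓ, hℓ⟩ := hint e he
  have he' : e = fIv n ℓ (ℓ + d) := eq_fIv_of_image hℓ
  have hn : ℓ + d ≤ n := by
    have : ℓ + d - 1 ∈ e.image Fin.val := by rw [hℓ, Finset.mem_Ico]; omega
    rcases Finset.mem_image.1 this with ⟨x, _, hx⟩
    have := x.isLt; omega
  exact ⟨ℓ, ⟨hn, he' ▸ he⟩, he'⟩

lemma edge_card {n d : ℕ} {H : ZFHypergraph (Fin n)} (hint : IsIntervalHG H d)
    (hd : 1 ≤ d) {e : Finset (Fin n)} (he : e ∈ H.edges) : e.card = d := by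
  obtain ⟨ℓ, hℓ, rfl⟩ := edge_shape hint hd he
  rw [card_fIv hℓ.1]; omega

lemma inL_mem_edges {n d : ℕ} {H : ZFHypergraph (Fin n)} {ℓ : ℕ} (h : inL H d ℓ) :
    fIv n ℓ (ℓ + d) ∈ H.edges := h.2

/-- Key uniqueness: an edge containing two prescribed values is determined. -/
lemma edge_sub_interval {n d : ℕ} {H : ZFHypergraph (Fin n)} (hint : IsIntervalHG H d)
    (hd : 1 ≤ d) {e : Finset (Fin n)} (he : e ∈ H.edges) {x : Fin n} (hx : x ∈ e) :
    ∃ ℓ, inL H d ℓ ∧ e = fIv n ℓ (ℓ + d) ∧ ℓ ≤ x.val ∧ x.val < ℓ + d := by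
  obtain ⟨ℓ, h1, rfl⟩ := edge_shape hint hd he
  exact ⟨ℓ, h1, rfl, (mem_fIv.1 hx).1, (mem_fIv.1 hx).2⟩
/-! ### Completion lemmas -/

lemma mem_fIv' {n a b y : ℕ} (hy : y < n) :
    (⟨y, hy⟩ : Fin n) ∈ fIv n a b ↔ a ≤ y ∧ y < b := by simp [fIv]

lemma complete_gap {n d : ℕ} {H : ZFHypergraph (Fin n)} (hint : IsIntervalHG H d)
    (hd : 1 ≤ d) {ℓ : ℕ} (hℓ : inL H d ℓ) {v u : Fin n}
    (hv1 : ℓ < v.val) (hv2 : v.val < ℓ + d - 1)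
    (hu : insert u ((fIv n ℓ (ℓ + d)).erase v) ∈ H.edges) : u = v := by
  obtain ⟨hℓn, hℓe⟩ := hℓ
  set S := (fIv n ℓ (ℓ + d)).erase v with hS
  obtain ⟨m, hm, hsh⟩ := edge_shape hint hd hu
  have hsub : S ⊆ fIv n m (m + d) := by
    rw [← hsh]; exact Finset.subset_insert _ _
  have hℓmem : (⟨ℓ, by omega⟩ : Fin n) ∈ S := by
    rw [hS, Finset.mem_erase]
    refine ⟨?_, (mem_fIv' _).2 ⟨le_refl _, by omega⟩⟩
    intro h; rw [← h] at hv1; simp at hv1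
  have hrmem : (⟨ℓ + d - 1, by omega⟩ : Fin n) ∈ S := by
    rw [hS, Finset.mem_erase]
    refine ⟨?_, (mem_fIv' _).2 ⟨by omega, by omega⟩⟩
    intro h; rw [← h] at hv2; simp at hv2
  have h1 := (mem_fIv' _).1 (hsub hℓmem)
  have h2 := (mem_fIv' _).1 (hsub hrmem)
  have hmℓ : m = ℓ := by omega
  subst hmℓ
  have humem : u ∈ insert u S := Finset.mem_insert_self _ _
  rw [hsh] at humem
  have hu' := mem_fIv.1 humem
  by_contra hne
  have huS : u ∈ S := by
    by_contra h
    exact hne (by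
      by_contra hne2
      exact h (Finset.mem_erase.2 ⟨hne2, mem_fIv.2 hu'⟩))
  rw [Finset.insert_eq_self.2 huS] at hu hsh
  have hcS : S.card = d - 1 := by
    rw [hS, Finset.card_erase_of_mem (mem_fIv.2 ⟨by omega, by omega⟩), card_fIv hℓn]
    omega
  have := edge_card hint hd hu
  omega

lemma complete_right {n d : ℕ} {H : ZFHypergraph (Fin n)} (hint : IsIntervalHG H d)
    (hd : 2 ≤ d) {v : ℕ} (hvd : v + d ≤ n) {u : Fin n}
    (hu : insert u (fIv n (v + 1) (v + d)) ∈ H.edges) :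
    (u.val = v ∧ inL H d v) ∨ (u.val = v + d ∧ inL H d (v + 1)) := by
  set S := fIv n (v + 1) (v + d) with hS
  obtain ⟨m, hm, hsh⟩ := edge_shape hint (by omega) hu
  have hmn := hm.1
  have hsub : S ⊆ fIv n m (m + d) := by
    rw [← hsh]; exact Finset.subset_insert _ _
  have h1 := (mem_fIv' (show v + 1 < n by omega)).1
    (hsub ((mem_fIv' _).2 ⟨le_refl _, by omega⟩))
  have h2 := (mem_fIv' (show v + d - 1 < n by omega)).1
    (hsub ((mem_fIv' _).2 ⟨by omega, by omega⟩))
  have huns : u ∉ S := by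
    intro huS
    rw [Finset.insert_eq_self.2 huS] at hu hsh
    have hc1 := edge_card hint (by omega) hu
    have hc2 : S.card = d - 1 := by rw [hS, card_fIv hvd]; omega
    omega
  have humem : u ∈ insert u S := Finset.mem_insert_self _ _
  rw [hsh] at humem
  have hu' := mem_fIv.1 humem
  have hunS : ¬ (v + 1 ≤ u.val ∧ u.val < v + d) := by
    intro h; exact huns (mem_fIv.2 h)
  have hcases : m = v ∨ m = v + 1 := by omega
  rcases hcases with rfl | rfl
  · left; exact ⟨by omega, hm⟩
  · right; exact ⟨by omega, hm⟩

lemma complete_left {n d : ℕ} {H : ZFHypergraph (Fin n)} (hint : IsIntervalHG H d)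
    (hd : 2 ≤ d) {ℓ : ℕ} (hvd : ℓ + d - 1 ≤ n) {u : Fin n}
    (hu : insert u (fIv n ℓ (ℓ + d - 1)) ∈ H.edges) :
    (u.val = ℓ + d - 1 ∧ inL H d ℓ) ∨ (1 ≤ ℓ ∧ u.val = ℓ - 1 ∧ inL H d (ℓ - 1)) := by
  set S := fIv n ℓ (ℓ + d - 1) with hS
  obtain ⟨m, hm, hsh⟩ := edge_shape hint (by omega) hu
  have hmn := hm.1
  have hsub : S ⊆ fIv n m (m + d) := by
    rw [← hsh]; exact Finset.subset_insert _ _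
  have h1 := (mem_fIv' (show ℓ < n by omega)).1
    (hsub ((mem_fIv' _).2 ⟨le_refl _, by omega⟩))
  have h2 := (mem_fIv' (show ℓ + d - 2 < n by omega)).1
    (hsub ((mem_fIv' _).2 ⟨by omega, by omega⟩))
  have huns : u ∉ S := by
    intro huS
    rw [Finset.insert_eq_self.2 huS] at hu hsh
    have hc1 := edge_card hint (by omega) hu
    have hc2 : S.card = d - 1 := by rw [hS, card_fIv (by omega)]; omega
    omega
  have humem : u ∈ insert u S := Finset.mem_insert_self _ _
  rw [hsh] at humem
  have hu' := mem_fIv.1 humem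
  have hunS : ¬ (ℓ ≤ u.val ∧ u.val < ℓ + d - 1) := by
    intro h; exact huns (mem_fIv.2 h)
  have hcases : m = ℓ ∨ (1 ≤ ℓ ∧ m = ℓ - 1) := by omega
  rcases hcases with rfl | ⟨h1ℓ, hm2⟩
  · left; exact ⟨by omega, hm⟩
  · subst hm2; right; exact ⟨h1ℓ, by omega, hm⟩

/-! ### Forcing steps -/

lemma force_interior {n d : ℕ} {H : ZFHypergraph (Fin n)} (hint : IsIntervalHG H d)
    (hd : 3 ≤ d) {X : Set (Fin n)} {v : Fin n} (hvX : v ∉ X) {ℓ : ℕ} (hℓ : inL H d ℓ)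
    (hv1 : ℓ < v.val) (hv2 : v.val < ℓ + d - 1) :
    ZFStep H d X (insert v X) := by
  have hvmem : v ∈ fIv n ℓ (ℓ + d) := mem_fIv.2 ⟨by omega, by omega⟩
  refine ⟨(fIv n ℓ (ℓ + d)).erase v, v, ?_, Finset.notMem_erase _ _, hvX, ?_, ?_, rfl⟩
  · rw [Finset.card_erase_of_mem hvmem, card_fIv hℓ.1]; omega
  · rw [Finset.insert_erase hvmem]; exact hℓ.2
  · intro u _ hu; exact complete_gap hint (by omega) hℓ hv1 hv2 hu

lemma no_step_unique_fails {n d : ℕ} {H : ZFHypergraph (Fin n)} {X : Set (Fin n)}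
    (hstuck : ¬ ∃ X', ZFStep H d X X') (S : Finset (Fin n)) (w : Fin n)
    (hS : S.card = d - 1) (hwS : w ∉ S) (hwX : w ∉ X) (he : insert w S ∈ H.edges) :
    ∃ u, u ∉ X ∧ insert u S ∈ H.edges ∧ u ≠ w := by
  by_contra h
  push_neg at h
  exact hstuck ⟨insert w X, S, w, hS, hwS, hwX, he,
    fun u hu hue => by
      by_contra hne
      exact hne (h u hu hue), rfl⟩

/-! ### Components -/

lemma linked_symm {V : Type*} {H : ZFHypergraph V} : Symmetric H.Linked := by
  rintro a b ⟨e, he, ha, hb⟩; exact ⟨e, he, hb, ha⟩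

lemma mem_componentSet_self {V : Type*} (H : ZFHypergraph V) (v : V) :
    v ∈ componentSet H v := Relation.ReflTransGen.refl

lemma componentSet_eq_of_mem {V : Type*} {H : ZFHypergraph V} {u v : V}
    (h : u ∈ componentSet H v) : componentSet H u = componentSet H v := by
  have hsym : Symmetric (Relation.ReflTransGen H.Linked) :=
    by haveI : Std.Symm H.Linked := ⟨linked_symm⟩; exact fun a b h => Std.Symm.symm a b h
  ext x
  constructor
  · intro hx; exact Relation.ReflTransGen.trans h hx
  · intro hx; exact Relation.ReflTransGen.trans (hsym h) hx

lemma edge_subset_componentSet {V : Type*} {H : ZFHypergraph V} {e : Finset V}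
    (he : e ∈ H.edges) {x : V} (hx : x ∈ e) :
    (↑e : Set V) ⊆ componentSet H x := by
  intro y hy
  exact Relation.ReflTransGen.single ⟨e, he, hx, hy⟩

lemma edge_subset_of_mem_component {V : Type*} {H : ZFHypergraph V} {v : V}
    {U : Set V} (hU : U = componentSet H v) {e : Finset V} (he : e ∈ H.edges)
    {x : V} (hx : x ∈ e) (hxU : x ∈ U) : (↑e : Set V) ⊆ U := by
  subst hU
  rw [← componentSet_eq_of_mem hxU]
  exact edge_subset_componentSet he hx
/-! ### SI components: basic facts -/

lemma muld_le {i m d : ℕ} (h : i ≤ m) : i * d ≤ m * d := Nat.mul_le_mul_right d h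

lemma muld_lt {i m d : ℕ} (h : i < m) : i * d + d ≤ m * d := by
  have h2 : (i + 1) * d ≤ m * d := Nat.mul_le_mul_right d h
  have h3 : (i + 1) * d = i * d + d := by ring
  omega

/-- The collection of SI components. -/
def sicSet {n : ℕ} (H : ZFHypergraph (Fin n)) (d : ℕ) : Set (Set (Fin n)) :=
  {U | (∃ v : Fin n, U = componentSet H v) ∧ IsSIComponent H d U}

lemma mem_of_val_image {n : ℕ} {U : Set (Fin n)} {a b : ℕ}
    (hval : Fin.val '' U = Set.Ico a b) {x : Fin n} :
    x ∈ U ↔ a ≤ x.val ∧ x.val < b := by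
  constructor
  · intro hx
    have : x.val ∈ Fin.val '' U := ⟨x, hx, rfl⟩
    rw [hval] at this; exact this
  · intro hx
    have : x.val ∈ Set.Ico a b := hx
    rw [← hval] at this
    rcases this with ⟨y, hy, hyx⟩
    rwa [← Fin.val_injective hyx]

lemma si_bound {n : ℕ} {U : Set (Fin n)} {a b : ℕ} (hb : a < b)
    (hval : Fin.val '' U = Set.Ico a b) : b ≤ n := by
  have : b - 1 ∈ Set.Ico a b := by constructor <;> omega
  rw [← hval] at this
  rcases this with ⟨y, _, hyx⟩
  have := y.isLt; omega

/-- The two SI edges with a given index are edges of `H` contained in `U`. -/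
lemma si_edge_mem {n d : ℕ} {H : ZFHypergraph (Fin n)} {U : Set (Fin n)} {a s : ℕ}
    (hs : 1 ≤ s) (hval : Fin.val '' U = Set.Ico a (a + s * d + 1))
    (hiff : ∀ e : Finset (Fin n),
      (e ∈ H.edges ∧ (↑e : Set (Fin n)) ⊆ U) ↔
      ∃ i < s, e.image Fin.val = Finset.Ico (a + i * d) (a + i * d + d) ∨
               e.image Fin.val = Finset.Ico (a + i * d + 1) (a + i * d + 1 + d))
    (hd : 1 ≤ d) {i : ℕ} (hi : i < s) :
    (fIv n (a + i * d) (a + i * d + d) ∈ H.edges ∧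
      (↑(fIv n (a + i * d) (a + i * d + d)) : Set (Fin n)) ⊆ U) ∧
    (fIv n (a + i * d + 1) (a + i * d + 1 + d) ∈ H.edges ∧
      (↑(fIv n (a + i * d + 1) (a + i * d + 1 + d)) : Set (Fin n)) ⊆ U) := by
  have hsn : a + s * d + 1 ≤ n := si_bound (by omega) hval
  have hid : a + i * d + 1 + d ≤ a + s * d + 1 := by
    have := muld_lt (d := d) hi
    omega
  constructor
  · exact (hiff _).2 ⟨i, hi, Or.inl (image_fIv (by omega))⟩
  · exact (hiff _).2 ⟨i, hi, Or.inr (image_fIv (by omega))⟩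

/-- An edge of `H` contained in an SI component containing the joint `a + m*d`
is one of the two SI edges adjacent to that joint. -/
lemma si_edge_at_joint {n d : ℕ} {H : ZFHypergraph (Fin n)} {U : Set (Fin n)} {a s : ℕ}
    (hd : 3 ≤ d)
    (hiff : ∀ e : Finset (Fin n),
      (e ∈ H.edges ∧ (↑e : Set (Fin n)) ⊆ U) ↔
      ∃ i < s, e.image Fin.val = Finset.Ico (a + i * d) (a + i * d + d) ∨
               e.image Fin.val = Finset.Ico (a + i * d + 1) (a + i * d + 1 + d))
    {e : Finset (Fin n)} (he : e ∈ H.edges) (heU : (↑e : Set (Fin n)) ⊆ U)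
    {m : ℕ} (hm : m ≤ s) {w : Fin n} (hw : w.val = a + m * d) (hwe : w ∈ e) :
    (m < s ∧ e = fIv n (a + m * d) (a + m * d + d)) ∨
    (1 ≤ m ∧ e = fIv n (a + (m - 1) * d + 1) (a + (m - 1) * d + 1 + d)) := by
  obtain ⟨i, hi, hsh | hsh⟩ := (hiff e).1 ⟨he, heU⟩
  · left
    have he' : e = fIv n (a + i * d) (a + i * d + d) := eq_fIv_of_image hsh
    have hwmem : w ∈ fIv n (a + i * d) (a + i * d + d) := he' ▸ hwe
    have := mem_fIv.1 hwmem
    rw [hw] at this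
    have him : i = m := by
      rcases Nat.lt_trichotomy i m with h | h | h
      · exfalso
        have := muld_lt (d := d) h
        omega
      · exact h
      · exfalso
        have := muld_lt (d := d) h
        omega
    subst him
    exact ⟨hi, he'⟩
  · right
    have he' : e = fIv n (a + i * d + 1) (a + i * d + 1 + d) := eq_fIv_of_image hsh
    have hwmem : w ∈ fIv n (a + i * d + 1) (a + i * d + 1 + d) := he' ▸ hwe
    have := mem_fIv.1 hwmem
    rw [hw] at this
    have him : i + 1 = m := by
      rcases Nat.lt_trichotomy (i + 1) m with h | h | h
      · exfalso
        have := muld_lt (d := d) h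
        have h3 : (i + 1) * d = i * d + d := by ring
        omega
      · exact h
      · exfalso
        have : m * d ≤ i * d := muld_le (by omega)
        have h3 : (i + 1) * d = i * d + d := by ring
        omega
    have h1m : 1 ≤ m := by omega
    refine ⟨h1m, ?_⟩
    have : m - 1 = i := by omega
    rw [this]
    exact he'
/-! ### Building an SI component from chain data -/

lemma pattern_lemma {n d : ℕ} {H : ZFHypergraph (Fin n)} (hd : 3 ≤ d) {a j : ℕ}
    (hgap : ∀ i ≤ j, ∀ ℓ, inL H d ℓ → a + i * d + 1 < ℓ → a + (i + 1) * d ≤ ℓ)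
    {ℓ : ℕ} (hℓ : inL H d ℓ) (h1 : a ≤ ℓ) (h2 : ℓ ≤ a + j * d + 1) :
    ∃ i ≤ j, ℓ = a + i * d ∨ ℓ = a + i * d + 1 := by
  obtain ⟨i, r, hir, hrd⟩ : ∃ i r, i * d + r = ℓ - a ∧ r < d :=
    ⟨(ℓ - a) / d, (ℓ - a) % d, Nat.div_add_mod' _ _, Nat.mod_lt _ (by omega)⟩
  rcases Nat.lt_or_ge r 2 with hr2 | hr2
  · refine ⟨i, ?_, ?_⟩
    · by_contra hji; push_neg at hji
      have := muld_lt (d := d) hji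
      omega
    · omega
  · exfalso
    have hij : i ≤ j := by
      by_contra hji; push_neg at hji
      have := muld_lt (d := d) hji
      omega
    have hge := hgap i hij ℓ hℓ (by omega)
    have h3 : (i + 1) * d = i * d + d := by ring
    omega

lemma si_reach {n d : ℕ} {H : ZFHypergraph (Fin n)} (hd : 3 ≤ d) {a j : ℕ}
    (hL : ∀ i ≤ j, inL H d (a + i * d) ∧ inL H d (a + i * d + 1)) :
    ∀ t, t ≤ (j + 1) * d → ∀ (h : a + t < n) (ha : a < n),
      Relation.ReflTransGen H.Linked ⟨a, ha⟩ ⟨a + t, h⟩ := by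
  intro t
  induction t using Nat.strong_induction_on with
  | _ t IH =>
    intro htj h ha
    rcases Nat.eq_zero_or_pos t with rfl | ht0
    · have : (⟨a + 0, h⟩ : Fin n) = ⟨a, ha⟩ := Fin.ext (by simp)
      rw [this]
    · obtain ⟨i, r, hir, hrd⟩ : ∃ i r, i * d + r = t - 1 ∧ r < d :=
        ⟨(t - 1) / d, (t - 1) % d, Nat.div_add_mod' _ _, Nat.mod_lt _ (by omega)⟩
      have hjd : (j + 1) * d = j * d + d := by ring
      have hij : i ≤ j := by
        by_contra hji; push_neg at hji
        have := muld_lt (d := d) hji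
        omega
      have hidjd : i * d ≤ j * d := muld_le hij
      rcases Nat.lt_or_ge r (d - 1) with hcase | hcase
      · have hE := (hL i hij).1
        have hEn := hE.1
        have hmem1 : (⟨a + i * d, by omega⟩ : Fin n) ∈ fIv n (a + i * d) (a + i * d + d) :=
          (mem_fIv' _).2 ⟨le_refl _, by omega⟩
        have hmem2 : (⟨a + t, h⟩ : Fin n) ∈ fIv n (a + i * d) (a + i * d + d) :=
          (mem_fIv' _).2 ⟨by omega, by omega⟩
        have hreach := IH (i * d) (by omega) (by omega) (by omega) ha
        exact Relation.ReflTransGen.tail hreach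
          ⟨fIv n (a + i * d) (a + i * d + d), hE.2, hmem1, hmem2⟩
      · have hE := (hL i hij).2
        have hEn := hE.1
        have hmem1 : (⟨a + (i * d + 1), by omega⟩ : Fin n) ∈
            fIv n (a + i * d + 1) (a + i * d + 1 + d) :=
          (mem_fIv' _).2 ⟨by omega, by omega⟩
        have hmem2 : (⟨a + t, h⟩ : Fin n) ∈ fIv n (a + i * d + 1) (a + i * d + 1 + d) :=
          (mem_fIv' _).2 ⟨by omega, by omega⟩
        have hreach := IH (i * d + 1) (by omega) (by omega) (by omega) ha
        exact Relation.ReflTransGen.tail hreach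
          ⟨fIv n (a + i * d + 1) (a + i * d + 1 + d), hE.2, hmem1, hmem2⟩

lemma build_SI {n d : ℕ} {H : ZFHypergraph (Fin n)} (hint : IsIntervalHG H d) (hd : 3 ≤ d)
    {a j : ℕ}
    (hL : ∀ i ≤ j, inL H d (a + i * d) ∧ inL H d (a + i * d + 1))
    (hgap : ∀ i ≤ j, ∀ ℓ, inL H d ℓ → a + i * d + 1 < ℓ → a + (i + 1) * d ≤ ℓ)
    (hleft : ∀ ℓ, inL H d ℓ → ℓ < a → ℓ + d ≤ a)
    (hna : ¬ inL H d (a + (j + 1) * d))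
    (hn : a + (j + 1) * d < n) :
    ∃ U ∈ sicSet H d, (⟨a, by omega⟩ : Fin n) ∈ U ∧ ∀ u ∈ U, a ≤ u.val := by
  have hjd : (j + 1) * d = j * d + d := by ring
  set U : Set (Fin n) := {x : Fin n | a ≤ x.val ∧ x.val < a + (j + 1) * d + 1} with hU
  have hmemU : ∀ x : Fin n, x ∈ U ↔ a ≤ x.val ∧ x.val < a + (j + 1) * d + 1 :=
    fun x => Iff.rfl
  have hmemU' : ∀ (y : ℕ) (hy : y < n),
      (⟨y, hy⟩ : Fin n) ∈ U ↔ a ≤ y ∧ y < a + (j + 1) * d + 1 := fun y hy => Iff.rfl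
  have hval : Fin.val '' U = Set.Ico a (a + (j + 1) * d + 1) := by
    ext y
    simp only [Set.mem_image, Set.mem_Ico]
    constructor
    · rintro ⟨x, hx, rfl⟩; exact (hmemU x).1 hx
    · rintro ⟨h1, h2⟩
      exact ⟨⟨y, by omega⟩, (hmemU' _ _).2 ⟨h1, h2⟩, rfl⟩
  have hiff : ∀ e : Finset (Fin n),
      (e ∈ H.edges ∧ (↑e : Set (Fin n)) ⊆ U) ↔
      ∃ i < j + 1, e.image Fin.val = Finset.Ico (a + i * d) (a + i * d + d) ∨
        e.image Fin.val = Finset.Ico (a + i * d + 1) (a + i * d + 1 + d) := by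
    intro e
    constructor
    · rintro ⟨he, heU⟩
      obtain ⟨ℓ, hℓ, rfl⟩ := edge_shape hint (by omega) he
      have hℓn := hℓ.1
      have hℓa : a ≤ ℓ := by
        by_contra hla; push_neg at hla
        have := hleft ℓ hℓ hla
        have h4 := (hmemU' ℓ (by omega)).1
          (heU ((mem_fIv' _).2 ⟨le_refl _, by omega⟩))
        omega
      have hℓtop : ℓ + d ≤ a + (j + 1) * d + 1 := by
        have h4 := (hmemU' (ℓ + d - 1) (by omega)).1
          (heU ((mem_fIv' _).2 ⟨by omega, by omega⟩))
        omega
      have hℓj : ℓ ≤ a + j * d + 1 := by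
        by_contra hgt; push_neg at hgt
        have h4 := hgap j (le_refl _) ℓ hℓ hgt
        have h5 : ℓ = a + (j + 1) * d := by omega
        rw [← h5] at hna
        exact hna hℓ
      obtain ⟨i, hij, hpat | hpat⟩ := pattern_lemma hd hgap hℓ hℓa hℓj
      · subst hpat
        exact ⟨i, by omega, Or.inl (image_fIv hℓ.1)⟩
      · subst hpat
        exact ⟨i, by omega, Or.inr (image_fIv hℓ.1)⟩
    · rintro ⟨i, hi, hsh | hsh⟩
      · have hij : i ≤ j := by omega
        have hidjd : i * d ≤ j * d := muld_le hij
        have hE := (hL i hij).1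
        have he' : e = fIv n (a + i * d) (a + i * d + d) := eq_fIv_of_image hsh
        subst he'
        refine ⟨hE.2, ?_⟩
        intro x hx
        have := mem_fIv.1 hx
        exact (hmemU _).2 ⟨by omega, by omega⟩
      · have hij : i ≤ j := by omega
        have hidjd : i * d ≤ j * d := muld_le hij
        have hE := (hL i hij).2
        have he' : e = fIv n (a + i * d + 1) (a + i * d + 1 + d) := eq_fIv_of_image hsh
        subst he'
        refine ⟨hE.2, ?_⟩
        intro x hx
        have := mem_fIv.1 hx
        exact (hmemU _).2 ⟨by omega, by omega⟩
  have hcomp : U = componentSet H ⟨a, by omega⟩ := by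
    apply Set.eq_of_subset_of_subset
    · intro x hx
      have hx' := (hmemU x).1 hx
      have hxa : x = ⟨a + (x.val - a), by omega⟩ := Fin.ext (by simp; omega)
      rw [hxa]
      exact si_reach hd hL (x.val - a) (by omega) _ _
    · intro x hx
      induction hx with
      | refl => exact (hmemU' _ _).2 ⟨le_refl _, by omega⟩
      | @tail y z hab hlink ih =>
        obtain ⟨e, he, hy, hz⟩ := hlink
        obtain ⟨ℓ, hℓ, rfl⟩ := edge_shape hint (by omega) he
        have hℓn := hℓ.1
        have hy' := mem_fIv.1 hy
        have hz' := mem_fIv.1 hz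
        have hyU := (hmemU y).1 ih
        have hℓa : a ≤ ℓ := by
          by_contra hla; push_neg at hla
          have := hleft ℓ hℓ hla
          omega
        have hℓj : ℓ ≤ a + j * d + 1 := by
          by_contra hgt; push_neg at hgt
          have h4 := hgap j (le_refl _) ℓ hℓ hgt
          have h5 : ℓ = a + (j + 1) * d := by omega
          rw [← h5] at hna
          exact hna hℓ
        obtain ⟨i, hij, hpat⟩ := pattern_lemma hd hgap hℓ hℓa hℓj
        have hidjd : i * d ≤ j * d := muld_le hij
        refine (hmemU z).2 ⟨by omega, by omega⟩
  exact ⟨U, ⟨⟨⟨a, by omega⟩, hcomp⟩, ⟨a, j + 1, by omega, hval, hiff⟩⟩,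
    (hmemU' _ _).2 ⟨le_refl _, by omega⟩, fun u hu => ((hmemU u).1 hu).1⟩
/-! ### The zero forcing set and the stuck-state theorem -/

lemma insert_fIv_top {n a b : ℕ} (hab : a ≤ b) (hb : b < n) :
    insert (⟨b, hb⟩ : Fin n) (fIv n a b) = fIv n a (b + 1) := by
  ext x
  simp only [Finset.mem_insert, mem_fIv, Fin.ext_iff]
  constructor
  · rintro (h | h) <;> simp_all <;> omega
  · intro h
    rcases Nat.lt_or_ge x.val b with h2 | h2
    · exact Or.inr ⟨h.1, h2⟩
    · exact Or.inl (by omega)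

lemma insert_fIv_bot {n a b : ℕ} (hab : a < b) (ha : a < n) :
    insert (⟨a, ha⟩ : Fin n) (fIv n (a + 1) b) = fIv n a b := by
  ext x
  simp only [Finset.mem_insert, mem_fIv, Fin.ext_iff]
  constructor
  · rintro (h | h) <;> simp_all <;> omega
  · intro h
    rcases Nat.lt_or_ge a x.val with h2 | h2
    · exact Or.inr ⟨by omega, h.2⟩
    · exact Or.inl (by omega)

/-- Isolated vertices of `H`. -/
def isoSet {n : ℕ} (H : ZFHypergraph (Fin n)) : Set (Fin n) := {v | H.IsIsolated v}

/-- Minimum vertices of SI components. -/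
def sicMin {n : ℕ} (H : ZFHypergraph (Fin n)) (d : ℕ) : Set (Fin n) :=
  {v | ∃ U ∈ sicSet H d, v ∈ U ∧ ∀ u ∈ U, v.val ≤ u.val}

theorem stuck_univ {n d : ℕ} {H : ZFHypergraph (Fin n)} (hint : IsIntervalHG H d)
    (hd : 3 ≤ d) {X : Set (Fin n)} (hB : isoSet H ∪ sicMin H d ⊆ X)
    (hstuck : ¬ ∃ X', ZFStep H d X X') : X = Set.univ := by
  classical
  by_contra hne
  have hW : (Finset.univ.filter (fun v : Fin n => v ∉ X)).Nonempty := by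
    rcases Set.ne_univ_iff_exists_notMem _ |>.1 hne with ⟨v, hv⟩
    exact ⟨v, Finset.mem_filter.2 ⟨Finset.mem_univ _, hv⟩⟩
  set v := (Finset.univ.filter (fun v : Fin n => v ∉ X)).min' hW with hv
  have hvX : v ∉ X := (Finset.mem_filter.1 ((Finset.univ.filter _).min'_mem hW)).2
  have hmin : ∀ u : Fin n, u ∉ X → v.val ≤ u.val := by
    intro u hu
    have h2 : v ≤ u :=
      Finset.min'_le _ u (Finset.mem_filter.2 ⟨Finset.mem_univ _, hu⟩)
    exact h2
  -- no white vertex is interior to an edge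
  have hwni : ∀ w : Fin n, w ∉ X → ∀ ℓ, inL H d ℓ → ℓ < w.val → w.val < ℓ + d - 1 →
      False := by
    intro w hwX ℓ hℓ h1 h2
    exact hstuck ⟨_, force_interior hint hd hwX hℓ h1 h2⟩
  -- v is not the max of any edge
  have hnomax : ∀ ℓ, inL H d ℓ → v.val = ℓ + d - 1 → False := by
    intro ℓ hℓ hveq
    have hℓn := hℓ.1
    have hveq' : v = ⟨ℓ + d - 1, by omega⟩ := Fin.ext hveq
    have hins : insert v (fIv n ℓ (ℓ + d - 1)) = fIv n ℓ (ℓ + d) := by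
      rw [hveq']
      rw [insert_fIv_top (by omega) (by omega)]
      congr 1
      omega
    obtain ⟨u, huX, hue, hune⟩ := no_step_unique_fails hstuck (fIv n ℓ (ℓ + d - 1)) v
      (by rw [card_fIv (by omega)]; omega)
      (by rw [mem_fIv]; omega) hvX (by rw [hins]; exact hℓ.2)
    rcases complete_left hint (by omega) (by omega) hue with ⟨h1, _⟩ | ⟨h0, h1, h2⟩
    · exact hune (Fin.ext (by omega))
    · have := hmin u huX
      omega
  -- v is in some edge, and must be its left endpoint
  have hviso : ¬ H.IsIsolated v := fun h => hvX (hB (Or.inl h))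
  have hvL : inL H d v.val := by
    rw [ZFHypergraph.IsIsolated] at hviso
    push_neg at hviso
    obtain ⟨e, he, hve⟩ := hviso
    obtain ⟨ℓ, hℓ, rfl⟩ := edge_shape hint (by omega) he
    have hv' := mem_fIv.1 hve
    rcases Nat.lt_or_ge ℓ v.val with h1 | h1
    · exfalso
      rcases Nat.lt_or_ge v.val (ℓ + d - 1) with h2 | h2
      · exact hwni v hvX ℓ hℓ h1 h2
      · exact hnomax ℓ hℓ (by omega)
    · have : ℓ = v.val := by omega
      rwa [← this]
  -- nothing to the left
  have hleft : ∀ ℓ, inL H d ℓ → ℓ < v.val → ℓ + d ≤ v.val := by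
    intro ℓ hℓ h1
    by_contra h2; push_neg at h2
    rcases Nat.lt_or_ge v.val (ℓ + d - 1) with h3 | h3
    · exact hwni v hvX ℓ hℓ h1 h3
    · exact hnomax ℓ hℓ (by omega)
  set a := v.val with ha
  set Wh : ℕ → Prop := fun y => ∃ h : y < n, (⟨y, h⟩ : Fin n) ∉ X with hWhdef
  have hWh : ∀ y z : ℕ, y = z → Wh y → Wh z := by rintro y z rfl h; exact h
  have hWha : Wh a := ⟨v.isLt, by rw [show (⟨a, v.isLt⟩ : Fin n) = v from Fin.ext rfl]; exact hvX⟩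
  -- the one-step stuck extraction at a white left endpoint
  have hstep : ∀ c : ℕ, Wh c → inL H d c → inL H d (c + 1) ∧ Wh (c + d) := by
    intro c hWc hcL
    obtain ⟨hcn, hcX⟩ := hWc
    have hcdn := hcL.1
    have hins : insert (⟨c, hcn⟩ : Fin n) (fIv n (c + 1) (c + d)) = fIv n c (c + d) :=
      insert_fIv_bot (by omega) _
    obtain ⟨u, huX, hue, hune⟩ := no_step_unique_fails hstuck
      (fIv n (c + 1) (c + d)) ⟨c, hcn⟩
      (by rw [card_fIv (by omega)]; omega)
      (by rw [mem_fIv]; simp) hcX (by rw [hins]; exact hcL.2)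
    rcases complete_right hint (by omega) (by omega) hue with ⟨h1, _⟩ | ⟨h1, h2⟩
    · exact absurd (Fin.ext h1 : u = ⟨c, hcn⟩) hune
    · have hun : c + d < n := by have := u.isLt; omega
      refine ⟨h2, hun, ?_⟩
      rwa [show (⟨c + d, hun⟩ : Fin n) = u from Fin.ext h1.symm]
  -- the chain predicate
  set Q : ℕ → Prop := fun i =>
    inL H d (a + i * d) ∧ inL H d (a + i * d + 1) ∧
    Wh (a + i * d) ∧ Wh (a + i * d + d) with hQ
  have hQ0 : Q 0 := by
    have h00 : a + 0 * d = a := by omega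
    rw [hQ]
    simp only [h00]
    have hvL' : inL H d a := hvL
    obtain ⟨hL1, hw1⟩ := hstep a hWha hvL'
    exact ⟨hvL', hL1, hWha, hw1⟩
  -- gap property derived from accumulated chain
  have hgapQ : ∀ j, (∀ k ≤ j, Q k) → ∀ k ≤ j, ∀ ℓ, inL H d ℓ →
      a + k * d + 1 < ℓ → a + (k + 1) * d ≤ ℓ := by
    intro j hQs k hk ℓ hℓ hℓgt
    by_contra h2; push_neg at h2
    obtain ⟨_, _, _, hwh⟩ := hQs k hk
    obtain ⟨hn1, hw1⟩ := hwh
    have hkd : (k + 1) * d = k * d + d := by ring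
    exact hwni _ hw1 ℓ hℓ (show ℓ < a + k * d + d by omega)
      (show a + k * d + d < ℓ + d - 1 by omega)
  -- chain step
  have hQstep : ∀ i, Q i → inL H d (a + (i + 1) * d) → Q (i + 1) := by
    intro i hQi hLnext
    have hid : (i + 1) * d = i * d + d := by ring
    have hid2 : (i + 1 + 1) * d = (i + 1) * d + d := by ring
    obtain ⟨_, _, _, hwh⟩ := hQi
    have hwh' : Wh (a + (i + 1) * d) := hWh _ _ (by omega) hwh
    obtain ⟨hL1, hw2⟩ := hstep _ hwh' hLnext
    exact ⟨hLnext, hL1, hwh', hWh _ _ (by omega) hw2⟩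
  -- termination
  have hterm : ∀ m i, (∀ k ≤ i, Q k) → n ≤ a + (i + 1) * d + m → False := by
    intro m
    induction m with
    | zero =>
      intro i hQs hbound
      obtain ⟨_, _, _, hn1, _⟩ := hQs i (le_refl _)
      have hid : (i + 1) * d = i * d + d := by ring
      omega
    | succ m IH =>
      intro i hQs hbound
      by_cases hL' : inL H d (a + (i + 1) * d)
      · have hQsucc := hQstep i (hQs i (le_refl _)) hL'
        refine IH (i + 1) (fun k hk => ?_) ?_
        · rcases Nat.lt_or_ge k (i + 1) with h | h
          · exact hQs k (by omega)
          · have : k = i + 1 := by omega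
            rw [this]; exact hQsucc
        · have h1 : (i + 1 + 1) * d = (i + 1) * d + d := by ring
          omega
      · -- SI component found
        obtain ⟨_, _, _, hn1, _⟩ := hQs i (le_refl _)
        have hid : (i + 1) * d = i * d + d := by ring
        have hn1' : a + (i + 1) * d < n := by omega
        obtain ⟨U, hU, haU, hminU⟩ := build_SI hint hd
          (fun k hk => ⟨(hQs k hk).1, (hQs k hk).2.1⟩)
          (hgapQ i hQs) hleft hL' hn1'
        have hmm : (⟨a, by omega⟩ : Fin n) ∈ sicMin H d := ⟨U, hU, haU, hminU⟩
        have hmem : (⟨a, by omega⟩ : Fin n) ∈ X := hB (Or.inr hmm)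
        rw [show (⟨a, by omega⟩ : Fin n) = v from Fin.ext rfl] at hmem
        exact hvX hmem
  exact hterm n 0 (fun k hk => by rw [Nat.le_zero.1 hk]; exact hQ0) (by omega)
/-! ### Reaching all-blue from the canonical forcing set -/

open scoped Classical in
lemma zf_reach_univ {n d : ℕ} {H : ZFHypergraph (Fin n)} (hint : IsIntervalHG H d)
    (hd : 3 ≤ d) :
    ∀ (k : ℕ) (X : Set (Fin n)), (Finset.univ.filter (fun v => v ∉ X)).card ≤ k →
      isoSet H ∪ sicMin H d ⊆ X → Relation.ReflTransGen (ZFStep H d) X Set.univ := by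
  classical
  intro k
  induction k with
  | zero =>
    intro X hcard hB
    have : X = Set.univ := by
      apply Set.eq_univ_of_forall
      intro v
      by_contra hv
      have : v ∈ Finset.univ.filter (fun v => v ∉ X) :=
        Finset.mem_filter.2 ⟨Finset.mem_univ _, hv⟩
      have := Finset.card_pos.2 ⟨v, this⟩
      omega
    rw [this]
  | succ k IH =>
    intro X hcard hB
    by_cases hstep : ∃ X', ZFStep H d X X'
    · obtain ⟨X', hX'⟩ := hstep
      obtain ⟨S, w, hS, hwS, hwX, he, huniq, hX'eq⟩ := hX'
      have hsub : Finset.univ.filter (fun v => v ∉ X') ⊆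
          (Finset.univ.filter (fun v => v ∉ X)).erase w := by
        intro u hu
        rw [Finset.mem_filter] at hu
        rw [Finset.mem_erase, Finset.mem_filter]
        have huX' := hu.2
        rw [hX'eq] at huX'
        refine ⟨?_, Finset.mem_univ _, fun huX => huX' (Set.mem_insert_iff.2 (Or.inr huX))⟩
        intro hrfl
        exact huX' (hrfl ▸ Set.mem_insert _ _)
      have hwmem : w ∈ Finset.univ.filter (fun v => v ∉ X) :=
        Finset.mem_filter.2 ⟨Finset.mem_univ _, hwX⟩
      have hcard' : (Finset.univ.filter (fun v => v ∉ X')).card ≤ k := by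
        have h1 := Finset.card_le_card hsub
        have h2 := Finset.card_erase_of_mem hwmem
        omega
      have hBX' : isoSet H ∪ sicMin H d ⊆ X' := by
        rw [hX'eq]
        exact fun x hx => Set.mem_insert_iff.2 (Or.inr (hB hx))
      exact Relation.ReflTransGen.head ⟨S, w, hS, hwS, hwX, he, huniq, hX'eq⟩
        (IH X' hcard' hBX')
    · rw [stuck_univ hint hd hB hstep]
/-! ### Lower bound invariants -/

lemma erase_fIv_bot {n a b : ℕ} (hab : a < b) (ha : a < n) :
    (fIv n a b).erase (⟨a, ha⟩ : Fin n) = fIv n (a + 1) b := by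
  rw [← insert_fIv_bot hab ha]
  exact Finset.erase_insert (by rw [mem_fIv]; simp)

lemma erase_fIv_top {n a b : ℕ} (hab : a ≤ b) (hb : b < n) :
    (fIv n a (b + 1)).erase (⟨b, hb⟩ : Fin n) = fIv n a b := by
  rw [← insert_fIv_top hab hb]
  exact Finset.erase_insert (by rw [mem_fIv]; simp)

lemma iso_not_forced {n d : ℕ} {H : ZFHypergraph (Fin n)} {X X' : Set (Fin n)}
    (hstep : ZFStep H d X X') {v : Fin n} (hiso : H.IsIsolated v) (hv : v ∉ X) :
    v ∉ X' := by
  obtain ⟨S, w, _, _, _, he, _, rfl⟩ := hstep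
  intro hmem
  rcases Set.mem_insert_iff.1 hmem with rfl | h
  · exact hiso _ he (Finset.mem_insert_self _ _)
  · exact hv h

lemma iso_subset_zf {n d : ℕ} {H : ZFHypergraph (Fin n)} {B : Set (Fin n)}
    (hzf : IsZFSet H d B) : isoSet H ⊆ B := by
  intro v hv
  by_contra hvB
  have hgen : ∀ Y, Relation.ReflTransGen (ZFStep H d) B Y → v ∉ Y := by
    intro Y hY
    induction hY with
    | refl => exact hvB
    | tail hst hstep ih => exact iso_not_forced hstep hv ih
  exact hgen Set.univ hzf (Set.mem_univ v)

lemma zf_meets_sic {n d : ℕ} {H : ZFHypergraph (Fin n)} (hint : IsIntervalHG H d)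
    (hd : 3 ≤ d) {B : Set (Fin n)} (hzf : IsZFSet H d B) {U : Set (Fin n)}
    (hU : U ∈ sicSet H d) : ∃ x, x ∈ B ∧ x ∈ U := by
  obtain ⟨⟨v0, hcomp⟩, a, s, hs, hval, hiff⟩ := hU
  have hsn : a + s * d + 1 ≤ n := si_bound (by omega) hval
  set J : Set (Fin n) := {x : Fin n | ∃ m, m ≤ s ∧ x.val = a + m * d} with hJ
  have hJU : J ⊆ U := by
    rintro x ⟨m, hm, hxval⟩
    have hmd : m * d ≤ s * d := muld_le hm
    exact (mem_of_val_image hval).2 ⟨by omega, by omega⟩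
  by_contra hnomeet
  push_neg at hnomeet
  have hBJ : B ∩ J = ∅ := by
    ext x
    simp only [Set.mem_inter_iff, Set.mem_empty_iff_false, iff_false]
    rintro ⟨hxB, hxJ⟩
    exact hnomeet x hxB (hJU hxJ)
  -- invariant: J stays white
  have hgen : ∀ Y0, Relation.ReflTransGen (ZFStep H d) B Y0 → Y0 ∩ J = ∅ := by
    intro Y0 hY0
    induction hY0 with
    | refl => exact hBJ
    | tail hst hstep ih =>
      rename_i Y Z
      obtain ⟨S, w, hS, hwS, hwY, he, huniq, rfl⟩ := hstep
      have hwJ : w ∉ J := by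
        rintro ⟨m, hm, hwval⟩
        have hmd : m * d ≤ s * d := muld_le hm
        have hwU : w ∈ U := hJU ⟨m, hm, hwval⟩
        have heU : (↑(insert w S) : Set (Fin n)) ⊆ U :=
          edge_subset_of_mem_component hcomp he (Finset.mem_insert_self _ _) hwU
        have hSerase : S = (insert w S).erase w := (Finset.erase_insert hwS).symm
        rcases si_edge_at_joint hd hiff he heU hm hwval (Finset.mem_insert_self _ _)
          with ⟨hms, hesh⟩ | ⟨h1m, hesh⟩
        · -- e = [a+md, a+md+d); the other joint a+(m+1)d also completes S
          have hm1d : (m + 1) * d = m * d + d := by ring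
          have hm1s : (m + 1) * d ≤ s * d := muld_le hms
          have hweq : w = ⟨a + m * d, by omega⟩ := Fin.ext hwval
          have hSval : S = fIv n (a + m * d + 1) (a + m * d + d) := by
            rw [hSerase, hesh, hweq, erase_fIv_bot (by omega) (by omega)]
          have hun : a + m * d + d < n := by omega
          have hins : insert (⟨a + m * d + d, hun⟩ : Fin n) S =
              fIv n (a + m * d + 1) (a + m * d + 1 + d) := by
            rw [hSval, insert_fIv_top (by omega) hun]
            congr 1
            omega
          have hedge : insert (⟨a + m * d + d, hun⟩ : Fin n) S ∈ H.edges := by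
            rw [hins]
            exact ((hiff _).2 ⟨m, hms, Or.inr (image_fIv (by omega))⟩).1
          have hnotin : (⟨a + m * d + d, hun⟩ : Fin n) ∉ Y := by
            intro hmem
            have : (⟨a + m * d + d, hun⟩ : Fin n) ∈ Y ∩ J :=
              ⟨hmem, ⟨m + 1, by omega, by rw [show a + (m+1)*d = a + m*d + d by omega]⟩⟩
            rw [ih] at this
            exact this
          have := huniq _ hnotin hedge
          rw [hweq] at this
          have := congrArg Fin.val this
          simp at this
          omega
        · -- e = [a+(m-1)d+1, ...); the other joint a+(m-1)d also completes S
          have h5 : m - 1 + 1 = m := by omega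
          have hm1d : (m - 1) * d + d = m * d := by
            calc (m - 1) * d + d = (m - 1 + 1) * d := by ring
            _ = m * d := by rw [h5]
          have hm1s : (m - 1) * d ≤ s * d := muld_le (by omega)
          have hweq : w = ⟨a + m * d, by omega⟩ := Fin.ext hwval
          have hSval : S = fIv n (a + (m - 1) * d + 1) (a + m * d) := by
            rw [hSerase, hesh, hweq,
              show a + (m - 1) * d + 1 + d = (a + m * d) + 1 by omega,
              erase_fIv_top (by omega) (by omega)]
          have hun : a + (m - 1) * d < n := by omega
          have hins : insert (⟨a + (m - 1) * d, hun⟩ : Fin n) S =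
              fIv n (a + (m - 1) * d) (a + (m - 1) * d + d) := by
            rw [hSval]
            rw [show a + m * d = a + (m - 1) * d + d by omega]
            exact insert_fIv_bot (by omega) _
          have hedge : insert (⟨a + (m - 1) * d, hun⟩ : Fin n) S ∈ H.edges := by
            rw [hins]
            exact ((hiff _).2 ⟨m - 1, by omega, Or.inl (image_fIv (by omega))⟩).1
          have hnotin : (⟨a + (m - 1) * d, hun⟩ : Fin n) ∉ Y := by
            intro hmem
            have : (⟨a + (m - 1) * d, hun⟩ : Fin n) ∈ Y ∩ J :=
              ⟨hmem, ⟨m - 1, by omega, rfl⟩⟩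
            rw [ih] at this
            exact this
          have := huniq _ hnotin hedge
          rw [hweq] at this
          have := congrArg Fin.val this
          simp at this
          omega
      ext x
      simp only [Set.mem_inter_iff, Set.mem_empty_iff_false, iff_false]
      rintro ⟨hxmem, hxJ⟩
      rcases Set.mem_insert_iff.1 hxmem with rfl | hxY
      · exact hwJ hxJ
      · have : x ∈ Y ∩ J := ⟨hxY, hxJ⟩
        rw [ih] at this
        exact this
  have hinv := hgen Set.univ hzf
  have haJ : (⟨a, by omega⟩ : Fin n) ∈ Set.univ ∩ J :=
    ⟨Set.mem_univ _, ⟨0, by omega, by simp⟩⟩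
  rw [hinv] at haJ
  exact haJ
/-! ### Counting: `Z0 = c₁ + c₂` -/

lemma sic_eq_of_mem {n d : ℕ} {H : ZFHypergraph (Fin n)} {U U' : Set (Fin n)}
    (hU : U ∈ sicSet H d) (hU' : U' ∈ sicSet H d) {x : Fin n}
    (hx : x ∈ U) (hx' : x ∈ U') : U = U' := by
  obtain ⟨⟨v0, rfl⟩, _⟩ := hU
  obtain ⟨⟨v0', rfl⟩, _⟩ := hU'
  rw [← componentSet_eq_of_mem hx, ← componentSet_eq_of_mem hx']

lemma si_not_isolated {n d : ℕ} {H : ZFHypergraph (Fin n)} (hd : 3 ≤ d)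
    {U : Set (Fin n)} (hU : U ∈ sicSet H d) {x : Fin n} (hx : x ∈ U) :
    ¬ H.IsIsolated x := by
  obtain ⟨_, a, s, hs, hval, hiff⟩ := hU
  have hsn : a + s * d + 1 ≤ n := si_bound (by omega) hval
  have hx' := (mem_of_val_image hval).1 hx
  intro hiso
  rcases Nat.lt_or_ge (x.val - a) (s * d) with hcase | hcase
  · obtain ⟨i, r, hir, hrd⟩ : ∃ i r, i * d + r = x.val - a ∧ r < d :=
      ⟨_, _, Nat.div_add_mod' _ _, Nat.mod_lt _ (by omega)⟩
    have his : i < s := by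
      by_contra h; push_neg at h
      have := muld_le (d := d) h
      omega
    have hE := ((si_edge_mem hs hval hiff (by omega) his).1).1
    exact hiso _ hE (mem_fIv.2 ⟨by omega, by omega⟩)
  · have h5 : s - 1 + 1 = s := by omega
    have h6 : (s - 1) * d + d = s * d := by
      calc (s - 1) * d + d = (s - 1 + 1) * d := by ring
      _ = s * d := by rw [h5]
    have hE := ((si_edge_mem hs hval hiff (by omega) (show s - 1 < s by omega)).2).1
    exact hiso _ hE (mem_fIv.2 ⟨by omega, by omega⟩)

lemma sicMin_val_min {n d : ℕ} {H : ZFHypergraph (Fin n)} {v : Fin n}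
    (hv : v ∈ sicMin H d) :
    ∃ U ∈ sicSet H d, v ∈ U ∧ ∀ u ∈ U, v.val ≤ u.val := hv

lemma sicMin_comp_mem {n d : ℕ} {H : ZFHypergraph (Fin n)} {v : Fin n}
    (hv : v ∈ sicMin H d) : componentSet H v ∈ sicSet H d ∧ v ∈ componentSet H v := by
  obtain ⟨U, hU, hvU, _⟩ := hv
  obtain ⟨⟨v0, hcomp⟩, hSI⟩ := hU
  have : componentSet H v = U := by rw [hcomp]; exact componentSet_eq_of_mem (hcomp ▸ hvU)
  rw [this]
  exact ⟨⟨⟨v0, hcomp⟩, hSI⟩, hvU⟩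

lemma sicMin_image : ∀ {n d : ℕ} {H : ZFHypergraph (Fin n)},
    (fun v => componentSet H v) '' sicMin H d = sicSet H d := by
  intro n d H
  apply Set.eq_of_subset_of_subset
  · rintro U ⟨v, hv, rfl⟩
    exact (sicMin_comp_mem hv).1
  · rintro U hU
    obtain ⟨⟨v0, hcomp⟩, a, s, hs, hval, hiff⟩ := hU
    have ha : ∃ x ∈ U, x.val = a := by
      have : a ∈ Fin.val '' U := by rw [hval]; exact ⟨le_refl _, by omega⟩
      obtain ⟨x, hx, hxa⟩ := this
      exact ⟨x, hx, hxa⟩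
    obtain ⟨x, hxU, hxa⟩ := ha
    have hxmin : ∀ u ∈ U, x.val ≤ u.val := by
      intro u hu
      have := (mem_of_val_image hval).1 hu
      omega
    refine ⟨x, ⟨U, ⟨⟨v0, hcomp⟩, a, s, hs, hval, hiff⟩, hxU, hxmin⟩, ?_⟩
    rw [hcomp]
    exact componentSet_eq_of_mem (hcomp ▸ hxU)

lemma sicMin_injOn {n d : ℕ} {H : ZFHypergraph (Fin n)} :
    Set.InjOn (fun v => componentSet H v) (sicMin H d) := by
  intro v hv v' hv' heq
  obtain ⟨U, hU, hvU, hmin⟩ := hv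
  obtain ⟨U', hU', hvU', hmin'⟩ := hv'
  have h1 : componentSet H v = U := by
    obtain ⟨⟨v0, hcomp⟩, _⟩ := hU
    rw [hcomp]; exact componentSet_eq_of_mem (hcomp ▸ hvU)
  have h2 : componentSet H v' = U' := by
    obtain ⟨⟨v0, hcomp⟩, _⟩ := hU'
    rw [hcomp]; exact componentSet_eq_of_mem (hcomp ▸ hvU')
  simp only at heq
  have hUU' : U = U' := by rw [← h1, ← h2, heq]
  subst hUU'
  exact Fin.ext (le_antisymm (hmin v' hvU') (hmin' v hvU))

lemma sicMin_ncard {n d : ℕ} {H : ZFHypergraph (Fin n)} :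
    (sicMin H d).ncard = (sicSet H d).ncard := by
  rw [← sicMin_image (H := H) (d := d)]
  exact (Set.ncard_image_of_injOn sicMin_injOn).symm

lemma sicMin_iso_disjoint {n d : ℕ} {H : ZFHypergraph (Fin n)} (hd : 3 ≤ d) :
    Disjoint (isoSet H) (sicMin H d) := by
  rw [Set.disjoint_left]
  rintro v hviso hvmin
  obtain ⟨U, hU, hvU, _⟩ := hvmin
  exact si_not_isolated hd hU hvU hviso

lemma sic_nonempty {n d : ℕ} {H : ZFHypergraph (Fin n)} {U : Set (Fin n)}
    (hU : U ∈ sicSet H d) : ∃ x, x ∈ U := by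
  obtain ⟨_, a, s, hs, hval, _⟩ := hU
  have : a ∈ Fin.val '' U := by rw [hval]; exact ⟨le_refl _, by omega⟩
  obtain ⟨x, hx, _⟩ := this
  exact ⟨x, hx⟩

open scoped Classical in
theorem Z0_eq {n d : ℕ} (hd : 3 ≤ d) {H : ZFHypergraph (Fin n)}
    (hint : IsIntervalHG H d) :
    Z0 H d = (isoSet H).ncard + (sicSet H d).ncard := by
  have hcard_union : (isoSet H ∪ sicMin H d).ncard
      = (isoSet H).ncard + (sicSet H d).ncard := by
    rw [Set.ncard_union_eq (sicMin_iso_disjoint hd) (Set.toFinite _) (Set.toFinite _),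
      sicMin_ncard]
  apply le_antisymm
  · -- upper bound: the canonical set forces
    have hfin : (isoSet H ∪ sicMin H d).Finite := Set.toFinite _
    have hzf : IsZFSet H d (↑hfin.toFinset : Set (Fin n)) := by
      rw [Set.Finite.coe_toFinset]
      exact zf_reach_univ hint hd _ _ (le_refl _) (le_refl _)
    have hmem : hfin.toFinset.card ∈
        {k | ∃ B : Finset (Fin n), B.card = k ∧ IsZFSet H d (↑B : Set (Fin n))} :=
      ⟨hfin.toFinset, rfl, hzf⟩
    have hle := Nat.sInf_le hmem
    rwa [show hfin.toFinset.card = (isoSet H).ncard + (sicSet H d).ncard by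
      rw [← hcard_union, Set.ncard_eq_toFinset_card _ hfin]] at hle
  · -- lower bound
    apply le_csInf
    · refine ⟨(Finset.univ : Finset (Fin n)).card, Finset.univ, rfl, ?_⟩
      rw [Finset.coe_univ]
      exact Relation.ReflTransGen.refl
    · rintro k ⟨B, rfl, hzf⟩
      have hiso : isoSet H ⊆ (↑B : Set (Fin n)) := iso_subset_zf hzf
      have hchoice : ∀ U ∈ sicSet H d, ∃ x, x ∈ (↑B : Set (Fin n)) ∧ x ∈ U :=
        fun U hU => zf_meets_sic hint hd hzf hU
      by_cases hsic : sicSet H d = ∅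
      · rw [hsic, Set.ncard_empty, add_zero]
        calc (isoSet H).ncard ≤ (↑B : Set (Fin n)).ncard :=
          Set.ncard_le_ncard hiso (Set.toFinite _)
        _ = B.card := Set.ncard_coe_finset B
      have hne : ∃ U, U ∈ sicSet H d := by
        rcases Set.eq_empty_or_nonempty (sicSet H d) with h | ⟨U, hU⟩
        · exact absurd h hsic
        · exact ⟨U, hU⟩
      obtain ⟨U0, hU0⟩ := hne
      obtain ⟨x0, _⟩ := sic_nonempty hU0
      haveI : Nonempty (Fin n) := ⟨x0⟩
      set g : Set (Fin n) → Fin n := fun U =>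
        if h : U ∈ sicSet H d then (hchoice U h).choose else Classical.arbitrary _
      have hg : ∀ U ∈ sicSet H d, g U ∈ (↑B : Set (Fin n)) ∧ g U ∈ U := by
        intro U hU
        simp only [g, dif_pos hU]
        exact (hchoice U hU).choose_spec
      have hginj : Set.InjOn g (sicSet H d) := by
        intro U hU U' hU' heq
        exact sic_eq_of_mem hU hU' (heq ▸ (hg U hU).2) (hg U' hU').2
      set C : Set (Fin n) := isoSet H ∪ g '' sicSet H d with hC
      have hCB : C ⊆ (↑B : Set (Fin n)) := by
        rintro x (hx | ⟨U, hU, rfl⟩)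
        · exact hiso hx
        · exact (hg U hU).1
      have hCdisj : Disjoint (isoSet H) (g '' sicSet H d) := by
        rw [Set.disjoint_left]
        rintro x hxiso ⟨U, hU, rfl⟩
        exact si_not_isolated hd hU (hg U hU).2 hxiso
      have hCcard : C.ncard = (isoSet H).ncard + (sicSet H d).ncard := by
        rw [hC, Set.ncard_union_eq hCdisj (Set.toFinite _) (Set.toFinite _),
          Set.ncard_image_of_injOn hginj]
      calc (isoSet H).ncard + (sicSet H d).ncard = C.ncard := hCcard.symm
      _ ≤ (↑B : Set (Fin n)).ncard := Set.ncard_le_ncard hCB (Set.toFinite _)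
      _ = B.card := Set.ncard_coe_finset B
/-! ### Nullity is at most the size of a zero forcing set -/

lemma exists_perm_comp {n d : ℕ} {f g : Fin d → Fin n} (hf : Function.Injective f)
    (hg : Function.Injective g)
    (him : Finset.image f Finset.univ = Finset.image g Finset.univ) :
    ∃ π : Equiv.Perm (Fin d), f ∘ π = g := by
  have hrange : Set.range g = Set.range f := by
    rw [← Set.image_univ, ← Set.image_univ, ← Finset.coe_univ, ← Finset.coe_image,
      ← Finset.coe_image, him]
  refine ⟨(Equiv.ofInjective g hg).trans ((Equiv.setCongr hrange).trans
    (Equiv.ofInjective f hf).symm), funext fun k => ?_⟩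
  show f ((Equiv.ofInjective f hf).symm ⟨g k, by rw [hrange.symm]; exact ⟨k, rfl⟩⟩) = g k
  rw [Equiv.apply_ofInjective_symm hf]

lemma graphical_eq_of_image {F : Type*} [Field F] {n d : ℕ}
    {A : (Fin d → Fin n) → F} (hsym : HMSymmetric A) {f g : Fin d → Fin n}
    (hf : Function.Injective f) (hg : Function.Injective g)
    (him : Finset.image f Finset.univ = Finset.image g Finset.univ) : A f = A g := by
  obtain ⟨π, hπ⟩ := exists_perm_comp hf hg him
  rw [← hπ]
  exact (hsym f π).symm

/-- The canonical tuple enumerating `S` on the first `d-1` slots with `w` last. -/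
noncomputable def rowTuple {n d : ℕ} (hd : 3 ≤ d) (S : Finset (Fin n))
    (hS : S.card = d - 1) (w : Fin n) : Fin d → Fin n := fun k =>
  if h : (k : ℕ) < d - 1 then (S.orderIsoOfFin hS ⟨k, h⟩ : Fin n) else w

lemma rowTuple_subst {n d : ℕ} (hd : 3 ≤ d) (S : Finset (Fin n))
    (hS : S.card = d - 1) (w j : Fin n) :
    (fun k : Fin d => if (k : ℕ) = d - 1 then j else rowTuple hd S hS w k)
      = rowTuple hd S hS j := by
  funext k
  rcases Nat.lt_or_ge (k : ℕ) (d - 1) with h | h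
  · have hne : ¬((k : ℕ) = d - 1) := by omega
    simp only [if_neg hne, rowTuple, dif_pos h]
  · have heq : (k : ℕ) = d - 1 := by have := k.isLt; omega
    have hnlt : ¬((k : ℕ) < d - 1) := by omega
    simp only [if_pos heq, rowTuple, dif_neg hnlt]

lemma rowTuple_image {n d : ℕ} (hd : 3 ≤ d) (S : Finset (Fin n))
    (hS : S.card = d - 1) (w : Fin n) :
    Finset.image (rowTuple hd S hS w) Finset.univ = insert w S := by
  ext x
  simp only [Finset.mem_image, Finset.mem_insert]
  constructor
  · rintro ⟨k, _, rfl⟩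
    rcases Nat.lt_or_ge (k : ℕ) (d - 1) with h | h
    · rw [rowTuple, dif_pos h]
      exact Or.inr (S.orderIsoOfFin hS ⟨k, h⟩).2
    · rw [rowTuple, dif_neg (by omega)]
      exact Or.inl rfl
  · rintro (rfl | hx)
    · refine ⟨⟨d - 1, by omega⟩, Finset.mem_univ _, ?_⟩
      rw [rowTuple, dif_neg (by simp)]
    · obtain ⟨m, hm⟩ := (S.orderIsoOfFin hS).surjective ⟨x, hx⟩
      refine ⟨⟨m, by have := m.isLt; omega⟩, Finset.mem_univ _, ?_⟩
      rw [rowTuple, dif_pos (by simp [m.isLt])]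
      simp only
      rw [show (⟨(⟨(m : ℕ), by have := m.isLt; omega⟩ : Fin d), by simp [m.isLt]⟩
        : Fin (d - 1)) = m from Fin.ext rfl, hm]

lemma rowTuple_injective {n d : ℕ} (hd : 3 ≤ d) (S : Finset (Fin n))
    (hS : S.card = d - 1) {w : Fin n} (hw : w ∉ S) :
    Function.Injective (rowTuple hd S hS w) := by
  intro k k' heq
  rcases Nat.lt_or_ge (k : ℕ) (d - 1) with h | h <;>
    rcases Nat.lt_or_ge (k' : ℕ) (d - 1) with h' | h'
  · simp only [rowTuple, dif_pos h, dif_pos h'] at heq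
    have h2 := (S.orderIsoOfFin hS).injective (Subtype.ext heq)
    exact Fin.ext (by simpa using congrArg Fin.val h2)
  · have hnlt : ¬((k' : ℕ) < d - 1) := by omega
    simp only [rowTuple, dif_pos h, dif_neg hnlt] at heq
    exact absurd (heq ▸ (S.orderIsoOfFin hS ⟨k, h⟩).2) hw
  · have hnlt : ¬((k : ℕ) < d - 1) := by omega
    simp only [rowTuple, dif_neg hnlt, dif_pos h'] at heq
    exact absurd (heq.symm ▸ (S.orderIsoOfFin hS ⟨k', h'⟩).2) hw
  · have := k.isLt; have := k'.isLt
    exact Fin.ext (by omega)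

lemma nullvec_step {F : Type*} [Field F] {n d : ℕ} (hd : 3 ≤ d)
    {H : ZFHypergraph (Fin n)} {A : (Fin d → Fin n) → F} (hA : InSFam H A)
    {x : Fin n → F} (hx : x ∈ nullSpace A) {X X' : Set (Fin n)}
    (hstep : ZFStep H d X X') (hX : ∀ v ∈ X, x v = 0) : ∀ v ∈ X', x v = 0 := by
  obtain ⟨S, w, hS, hwS, hwX, he, huniq, rfl⟩ := hstep
  suffices hxw : x w = 0 by
    intro v hv
    rcases Set.mem_insert_iff.1 hv with rfl | hv
    · exact hxw
    · exact hX v hv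
  have hrow := hx (rowTuple hd S hS w)
  have hterm : ∀ j : Fin n, j ∈ Finset.univ → j ≠ w →
      A (fun k => if (k : ℕ) = d - 1 then j else rowTuple hd S hS w k) * x j = 0 := by
    intro j _ hjw
    rw [rowTuple_subst]
    by_cases hzero : A (rowTuple hd S hS j) = 0
    · rw [hzero, zero_mul]
    · have hinj : Function.Injective (rowTuple hd S hS j) := by
        by_contra hninj
        exact hzero (hA.1.2 _ hninj)
      have hedge : insert j S ∈ H.edges := by
        rw [← hA.2, ← rowTuple_image hd S hS j]
        exact ⟨_, hinj, rfl, hzero⟩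
      by_cases hjX : j ∈ X
      · rw [hX j hjX, mul_zero]
      · exact absurd (huniq j hjX hedge) hjw
  rw [Finset.sum_eq_single_of_mem w (Finset.mem_univ w) hterm] at hrow
  rw [rowTuple_subst] at hrow
  have hAw : A (rowTuple hd S hS w) ≠ 0 := by
    rw [← hA.2] at he
    obtain ⟨i', hinj', him', hA'⟩ := he
    rw [graphical_eq_of_image hA.1.1 (rowTuple_injective hd S hS hwS) hinj'
      (by rw [rowTuple_image, him'])]
    exact hA'
  exact (mul_eq_zero.1 hrow).resolve_left hAw

lemma nullity_le_zf {F : Type*} [Field F] {n d : ℕ} (hd : 3 ≤ d)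
    {H : ZFHypergraph (Fin n)} {A : (Fin d → Fin n) → F} (hA : InSFam H A)
    {B : Finset (Fin n)} (hzf : IsZFSet H d (↑B : Set (Fin n))) :
    hmNullity F A ≤ B.card := by
  classical
  have hinj : Function.Injective
      (fun (x : nullSpace A) (b : ↥B) => (x : Fin n → F) b.val) := by
    intro x y hxy
    set z : Fin n → F := ((x - y : nullSpace A) : Fin n → F) with hzdef
    have hdiff : z ∈ nullSpace A := (x - y).2
    have hz : ∀ v, z v = (x : Fin n → F) v - (y : Fin n → F) v := fun v => rfl
    have hzero : ∀ v ∈ (↑B : Set (Fin n)), z v = 0 := by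
      intro v hv
      have h3 := congrFun hxy ⟨v, hv⟩
      simp only at h3
      rw [hz, h3, sub_self]
    have hgen : ∀ Y, Relation.ReflTransGen (ZFStep H d) (↑B : Set (Fin n)) Y →
        ∀ v ∈ Y, z v = 0 := by
      intro Y hY
      induction hY with
      | refl => exact hzero
      | tail hst hstep ih => exact nullvec_step hd hA hdiff hstep ih
    have hall := hgen Set.univ hzf
    apply Subtype.ext
    funext v
    have h4 := hall v (Set.mem_univ v)
    rw [hz] at h4
    exact sub_eq_zero.1 h4
  have hlin : IsLinearMap F
      (fun (x : nullSpace A) (b : ↥B) => (x : Fin n → F) b.val) :=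
    ⟨fun a b => rfl, fun c a => rfl⟩
  have hle := LinearMap.finrank_le_finrank_of_injective
    (f := hlin.mk' _) (by exact hinj)
  rw [hmNullity]
  calc Module.finrank F (nullSpace A) ≤ Module.finrank F (↥B → F) := hle
  _ = B.card := by rw [Module.finrank_pi F]; exact Fintype.card_coe B
/-! ### The indicator hypermatrix -/

open scoped Classical in
noncomputable def indMat (F : Type*) [Field F] {n : ℕ} (H : ZFHypergraph (Fin n))
    (d : ℕ) : (Fin d → Fin n) → F := fun i =>
  if Function.Injective i ∧ Finset.image i Finset.univ ∈ H.edges then 1 else 0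

lemma image_univ_perm {n d : ℕ} (i : Fin d → Fin n) (π : Equiv.Perm (Fin d)) :
    Finset.image (i ∘ π) Finset.univ = Finset.image i Finset.univ := by
  rw [← Finset.image_image]
  congr 1
  ext x
  simp only [Finset.mem_image, Finset.mem_univ, true_and, iff_true]
  exact ⟨π.symm x, π.apply_symm_apply x⟩

lemma inj_comp_perm {n d : ℕ} {i : Fin d → Fin n} {π : Equiv.Perm (Fin d)} :
    Function.Injective (i ∘ π) ↔ Function.Injective i := by
  constructor
  · intro h
    have : i = (i ∘ π) ∘ π.symm := by
      funext k; simp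
    rw [this]
    exact h.comp π.symm.injective
  · intro h
    exact h.comp π.injective

lemma enum_finset {n dd : ℕ} {e : Finset (Fin n)} (hcard : e.card = dd) :
    ∃ i : Fin dd → Fin n, Function.Injective i ∧ Finset.image i Finset.univ = e := by
  refine ⟨fun k => (e.orderIsoOfFin hcard k : Fin n), ?_, ?_⟩
  · intro k k' h
    exact (e.orderIsoOfFin hcard).injective (Subtype.ext h)
  · ext x
    simp only [Finset.mem_image, Finset.mem_univ, true_and]
    constructor
    · rintro ⟨k, rfl⟩
      exact (e.orderIsoOfFin hcard k).2
    · intro hx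
      exact ⟨(e.orderIsoOfFin hcard).symm ⟨x, hx⟩, by simp⟩

lemma indMat_inSFam {F : Type*} [Field F] {n d : ℕ} {H : ZFHypergraph (Fin n)}
    (hint : IsIntervalHG H d) (hd : 3 ≤ d) : InSFam H (indMat F H d) := by
  refine ⟨⟨?_, ?_⟩, ?_⟩
  · intro i π
    rw [indMat, indMat]
    by_cases h : Function.Injective i ∧ Finset.image i Finset.univ ∈ H.edges
    · rw [if_pos h, if_pos ⟨inj_comp_perm.2 h.1, by rw [image_univ_perm]; exact h.2⟩]
    · rw [if_neg h, if_neg (fun hc => h ⟨inj_comp_perm.1 hc.1,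
        by rw [← image_univ_perm i π]; exact hc.2⟩)]
  · intro i hni
    rw [indMat, if_neg (fun hc => hni hc.1)]
  · obtain ⟨E⟩ := H
    rw [hypergraphOf]
    congr 1
    ext e
    simp only [Set.mem_setOf_eq]
    constructor
    · rintro ⟨i, hinj, rfl, hne⟩
      rw [indMat] at hne
      by_cases hc : Function.Injective i ∧
          Finset.image i Finset.univ ∈ ZFHypergraph.edges ⟨E⟩
      · exact hc.2
      · rw [if_neg hc] at hne
        exact absurd rfl hne
    · intro he
      have hcard : e.card = d := edge_card hint (by omega) he
      obtain ⟨i, hinj, him⟩ := enum_finset hcard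
      refine ⟨i, hinj, him, ?_⟩
      rw [indMat, if_pos ⟨hinj, by rw [him]; exact he⟩]
      exact one_ne_zero

lemma indMat_ne_zero_iff {F : Type*} [Field F] {n d : ℕ} {H : ZFHypergraph (Fin n)}
    {i : Fin d → Fin n} (h : indMat F H d i ≠ 0) :
    Function.Injective i ∧ Finset.image i Finset.univ ∈ H.edges := by
  by_contra hc
  rw [indMat, if_neg hc] at h
  exact h rfl

lemma indMat_pos {F : Type*} [Field F] {n d : ℕ} {H : ZFHypergraph (Fin n)}
    {i : Fin d → Fin n} (h1 : Function.Injective i)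
    (h2 : Finset.image i Finset.univ ∈ H.edges) : indMat F H d i = 1 := by
  rw [indMat, if_pos ⟨h1, h2⟩]

/-! ### Null vectors of matrices in `S(H)` -/

lemma single_mem_null {F : Type*} [Field F] {n d : ℕ} (hd : 3 ≤ d)
    {H : ZFHypergraph (Fin n)} {A : (Fin d → Fin n) → F} (hA : InSFam H A)
    {v : Fin n} (hiso : H.IsIsolated v) : Pi.single v (1 : F) ∈ nullSpace A := by
  intro i
  rw [Finset.sum_eq_single_of_mem v (Finset.mem_univ v)
    (fun j _ hj => by rw [Pi.single_eq_of_ne hj, mul_zero])]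
  set iv : Fin d → Fin n := fun k => if (k : ℕ) = d - 1 then v else i k with hiv
  have hAz : A iv = 0 := by
    by_contra hne
    have hinj : Function.Injective iv := by
      by_contra hni
      exact hne (hA.1.2 _ hni)
    have hedge : Finset.image iv Finset.univ ∈ H.edges := by
      rw [← hA.2]
      exact ⟨iv, hinj, rfl, hne⟩
    have hvmem : v ∈ Finset.image iv Finset.univ := by
      refine Finset.mem_image.2 ⟨⟨d - 1, by omega⟩, Finset.mem_univ _, ?_⟩
      rw [hiv]
      simp
    exact hiso _ hedge hvmem
  rw [hAz, zero_mul]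

/-- The alternating joint vector of an SI component. -/
noncomputable def jointVec (F : Type*) [Field F] (n a s d : ℕ) : Fin n → F :=
  fun u => if a ≤ u.val ∧ u.val ≤ a + s * d ∧ (u.val - a) % d = 0
    then (-1 : F) ^ ((u.val - a) / d) else 0

lemma jointVec_joint {F : Type*} [Field F] {n a s d : ℕ} (hd : 1 ≤ d)
    {u : Fin n} {m : ℕ} (hm : m ≤ s) (hu : u.val = a + m * d) :
    jointVec F n a s d u = (-1 : F) ^ m := by
  have hmd : m * d ≤ s * d := muld_le hm
  rw [jointVec, if_pos ⟨by omega, by omega,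
    by rw [hu, Nat.add_sub_cancel_left, Nat.mul_mod_left]⟩]
  rw [hu, Nat.add_sub_cancel_left, Nat.mul_div_cancel m (by omega)]

lemma jointVec_ne_zero {F : Type*} [Field F] {n a s d : ℕ} (hd : 1 ≤ d)
    {u : Fin n} (h : jointVec F n a s d u ≠ 0) : ∃ m ≤ s, u.val = a + m * d := by
  rw [jointVec] at h
  by_cases hc : a ≤ u.val ∧ u.val ≤ a + s * d ∧ (u.val - a) % d = 0
  · refine ⟨(u.val - a) / d, ?_, ?_⟩
    · by_contra hgt; push_neg at hgt
      have h1 := Nat.div_add_mod' (u.val - a) d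
      have h2 := muld_lt (d := d) hgt
      omega
    · have h1 := Nat.div_add_mod' (u.val - a) d
      omega
  · rw [if_neg hc] at h
    exact absurd rfl h

lemma jointVec_mem_null {F : Type*} [Field F] {n d : ℕ} (hd : 3 ≤ d)
    {H : ZFHypergraph (Fin n)} (hint : IsIntervalHG H d) {U : Set (Fin n)}
    {v0 : Fin n} (hcomp : U = componentSet H v0) {a s : ℕ} (hs : 1 ≤ s)
    (hval : Fin.val '' U = Set.Ico a (a + s * d + 1))
    (hiff : ∀ e : Finset (Fin n),
      (e ∈ H.edges ∧ (↑e : Set (Fin n)) ⊆ U) ↔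
      ∃ i < s, e.image Fin.val = Finset.Ico (a + i * d) (a + i * d + d) ∨
               e.image Fin.val = Finset.Ico (a + i * d + 1) (a + i * d + 1 + d)) :
    jointVec F n a s d ∈ nullSpace (indMat F H d) := by
  intro i
  set A := indMat F H d with hAdef
  set x := jointVec F n a s d with hxdef
  have hsn : a + s * d + 1 ≤ n := si_bound (by omega) hval
  by_cases hex : ∃ j0 : Fin n,
      A (fun k => if (k : ℕ) = d - 1 then j0 else i k) * x j0 ≠ 0
  case neg =>
    push_neg at hex
    exact Finset.sum_eq_zero (fun j _ => hex j)
  case pos =>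
  obtain ⟨j0, hj0⟩ := hex
  set ij : Fin n → (Fin d → Fin n) :=
    fun j => (fun k => if (k : ℕ) = d - 1 then j else i k) with hijdef
  have hAne : A (ij j0) ≠ 0 := left_ne_zero_of_mul hj0
  have hxne : x j0 ≠ 0 := right_ne_zero_of_mul hj0
  obtain ⟨hinj0, hedge0⟩ := indMat_ne_zero_iff hAne
  obtain ⟨m, hm, hj0val⟩ := jointVec_ne_zero (by omega) hxne
  have hmd : m * d ≤ s * d := muld_le hm
  set e0 := Finset.image (ij j0) Finset.univ with he0
  have hj0e : j0 ∈ e0 := by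
    refine Finset.mem_image.2 ⟨⟨d - 1, by omega⟩, Finset.mem_univ _, ?_⟩
    simp [hijdef]
  have hj0U : j0 ∈ U := (mem_of_val_image hval).2 ⟨by omega, by omega⟩
  have heU : (↑e0 : Set (Fin n)) ⊆ U :=
    edge_subset_of_mem_component hcomp hedge0 hj0e hj0U
  -- identify the erased set
  have key : ∃ k, k < s ∧ e0.erase j0 = fIv n (a + k * d + 1) (a + k * d + d) := by
    rcases si_edge_at_joint hd hiff hedge0 heU hm hj0val hj0e with
      ⟨hms, hesh⟩ | ⟨h1m, hesh⟩
    · refine ⟨m, hms, ?_⟩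
      rw [hesh, show j0 = (⟨a + m * d, by omega⟩ : Fin n) from Fin.ext hj0val,
        erase_fIv_bot (by omega) _]
    · have h5 : m - 1 + 1 = m := by omega
      have hm1d : (m - 1) * d + d = m * d := by
        calc (m - 1) * d + d = (m - 1 + 1) * d := by ring
        _ = m * d := by rw [h5]
      have hj0val2 : j0.val = a + (m - 1) * d + d := by omega
      refine ⟨m - 1, by omega, ?_⟩
      rw [hesh, show j0 = (⟨a + (m - 1) * d + d, by omega⟩ : Fin n) from Fin.ext hj0val2,
        show a + (m - 1) * d + 1 + d = (a + (m - 1) * d + d) + 1 by omega,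
        erase_fIv_top (by omega) _]
  obtain ⟨k, hks, hSval⟩ := key
  have hkd : k * d + d ≤ s * d := muld_lt hks
  set S := e0.erase j0 with hSdef
  set c := a + k * d with hcdef
  -- images of substituted tuples
  have himg : ∀ j : Fin n, Finset.image (ij j) Finset.univ = insert j S := by
    intro j
    ext y
    simp only [Finset.mem_image, Finset.mem_univ, true_and, Finset.mem_insert]
    constructor
    · rintro ⟨kk, rfl⟩
      by_cases hkk : (kk : ℕ) = d - 1
      · left; simp [hijdef, hkk]
      · right
        rw [hSdef, Finset.mem_erase]
        constructor
        · intro hcontra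
          have h1 : ij j kk = ij j0 kk := by simp [hijdef, hkk]
          have h2 : ij j0 kk = ij j0 ⟨d - 1, by omega⟩ := by
            rw [show ij j0 ⟨d - 1, by omega⟩ = j0 by simp [hijdef], ← h1]
            exact hcontra
          have := hinj0 h2
          have := congrArg Fin.val this
          simp at this
          omega
        · rw [he0]
          exact Finset.mem_image.2 ⟨kk, Finset.mem_univ _, by simp [hijdef, hkk]⟩
    · rintro (rfl | hy)
      · exact ⟨⟨d - 1, by omega⟩, by simp [hijdef]⟩
      · rw [hSdef, Finset.mem_erase, he0] at hy
        obtain ⟨hyne, hymem⟩ := hy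
        obtain ⟨kk, _, hkk⟩ := Finset.mem_image.1 hymem
        have hkkne : (kk : ℕ) ≠ d - 1 := by
          intro hcontra
          rw [hijdef] at hkk
          simp only [if_pos hcontra] at hkk
          exact hyne hkk.symm
        refine ⟨kk, ?_⟩
        rw [← hkk]
        simp [hijdef, hkkne]
  have hinj : ∀ j : Fin n, j ∉ S → Function.Injective (ij j) := by
    intro j hjS kk kk' heq
    by_cases h1 : (kk : ℕ) = d - 1 <;> by_cases h2 : (kk' : ℕ) = d - 1
    · have := kk.isLt; have := kk'.isLt
      exact Fin.ext (by omega)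
    · exfalso
      simp only [hijdef, if_pos h1, if_neg h2] at heq
      apply hjS
      rw [hSdef, Finset.mem_erase]
      constructor
      · intro hcontra
        have h3 : ij j0 kk' = j0 := by simp [hijdef, if_neg h2]; rw [← hcontra, heq]
        have h4 : ij j0 ⟨d - 1, by omega⟩ = j0 := by simp [hijdef]
        have := hinj0 (h3.trans h4.symm)
        have := congrArg Fin.val this
        simp at this
        omega
      · rw [he0, heq]
        exact Finset.mem_image.2 ⟨kk', Finset.mem_univ _, by simp [hijdef, if_neg h2]⟩
    · exfalso
      simp only [hijdef, if_neg h1, if_pos h2] at heq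
      apply hjS
      rw [hSdef, Finset.mem_erase]
      constructor
      · intro hcontra
        have h3 : ij j0 kk = j0 := by simp [hijdef, if_neg h1]; rw [← hcontra, ← heq]
        have h4 : ij j0 ⟨d - 1, by omega⟩ = j0 := by simp [hijdef]
        have := hinj0 (h3.trans h4.symm)
        have := congrArg Fin.val this
        simp at this
        omega
      · rw [he0, ← heq]
        exact Finset.mem_image.2 ⟨kk, Finset.mem_univ _, by simp [hijdef, if_neg h1]⟩
    · simp only [hijdef, if_neg h1, if_neg h2] at heq
      have h3 : ij j0 kk = ij j0 kk' := by simp [hijdef, if_neg h1, if_neg h2, heq]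
      exact hinj0 h3
  -- the two joints
  have hcn : c + d < n := by omega
  set u1 : Fin n := ⟨c, by omega⟩ with hu1
  set u2 : Fin n := ⟨c + d, by omega⟩ with hu2
  have hu1S : u1 ∉ S := by
    rw [hu1, hSval]; intro hc; rw [mem_fIv'] at hc; omega
  have hu2S : u2 ∉ S := by
    rw [hu2, hSval]; intro hc; rw [mem_fIv'] at hc; omega
  have hins1 : insert u1 S = fIv n c (c + d) := by
    rw [hSval, hu1]
    exact insert_fIv_bot (by omega) _
  have hins2 : insert u2 S = fIv n (c + 1) (c + 1 + d) := by
    rw [hSval, hu2, insert_fIv_top (by omega) hcn]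
    congr 1
    omega
  have hedge1 : insert u1 S ∈ H.edges := by
    rw [hins1]
    exact ((hiff _).2 ⟨k, hks, Or.inl (by
      rw [show c + d = a + k * d + d by omega]
      exact image_fIv (by omega))⟩).1
  have hedge2 : insert u2 S ∈ H.edges := by
    rw [hins2]
    exact ((hiff _).2 ⟨k, hks, Or.inr (by
      rw [show c + 1 = a + k * d + 1 by omega]
      exact image_fIv (by omega))⟩).1
  -- all other terms vanish
  have hterm : ∀ j ∈ Finset.univ, j ∉ ({u1, u2} : Finset (Fin n)) →
      A (fun kk => if (kk : ℕ) = d - 1 then j else i kk) * x j = 0 := by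
    intro j _ hj
    by_cases hAz : A (ij j) = 0
    · rw [show (fun kk : Fin d => if (kk : ℕ) = d - 1 then j else i kk) = ij j from rfl,
        hAz, zero_mul]
    · exfalso
      obtain ⟨hinjj, hedgej⟩ := indMat_ne_zero_iff hAz
      rw [himg j] at hedgej
      have hjS : j ∉ S := by
        intro hjS2
        rw [Finset.insert_eq_self.2 hjS2] at hedgej
        have hc1 := edge_card hint (by omega) hedgej
        have hc2 : S.card = d - 1 := by rw [hSval, card_fIv (by omega)]; omega
        omega
      rw [hSval] at hedgej
      have := complete_right hint (by omega) (show c + d ≤ n by omega) hedgej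
      rcases this with ⟨hjv, _⟩ | ⟨hjv, _⟩
      · exact hj (Finset.mem_insert.2 (Or.inl (Fin.ext hjv)))
      · exact hj (Finset.mem_insert.2 (Or.inr (Finset.mem_singleton.2 (Fin.ext hjv))))
  have hsum : ∑ j : Fin n, A (fun kk => if (kk : ℕ) = d - 1 then j else i kk) * x j
      = ∑ j ∈ ({u1, u2} : Finset (Fin n)),
          A (fun kk => if (kk : ℕ) = d - 1 then j else i kk) * x j :=
    (Finset.sum_subset (Finset.subset_univ _) hterm).symm
  rw [hsum]
  have hne12 : u1 ≠ u2 := by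
    intro hcontra
    have := congrArg Fin.val hcontra
    simp [hu1, hu2] at this
    omega
  rw [Finset.sum_pair hne12]
  have hA1 : A (ij u1) = 1 := indMat_pos (hinj u1 hu1S) (by rw [himg u1]; exact hedge1)
  have hA2 : A (ij u2) = 1 := indMat_pos (hinj u2 hu2S) (by rw [himg u2]; exact hedge2)
  have hk1d : (k + 1) * d = k * d + d := by ring
  have hx1 : x u1 = (-1 : F) ^ k :=
    jointVec_joint (by omega) (by omega) (by rw [hu1])
  have hx2 : x u2 = (-1 : F) ^ (k + 1) :=
    jointVec_joint (by omega) (by omega) (by rw [hu2]; show c + d = a + (k + 1) * d; omega)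
  rw [show (fun kk : Fin d => if (kk : ℕ) = d - 1 then u1 else i kk) = ij u1 from rfl,
    show (fun kk : Fin d => if (kk : ℕ) = d - 1 then u2 else i kk) = ij u2 from rfl,
    hA1, hA2, hx1, hx2, one_mul, one_mul, pow_succ]
  ring
/-! ### Lower bound for the maximum nullity, and the main theorem -/

lemma exists_zf_finset {n d : ℕ} (hd : 3 ≤ d) {H : ZFHypergraph (Fin n)}
    (hint : IsIntervalHG H d) :
    ∃ B : Finset (Fin n), B.card = (isoSet H).ncard + (sicSet H d).ncard ∧
      IsZFSet H d (↑B : Set (Fin n)) := by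
  classical
  have hcard_union : (isoSet H ∪ sicMin H d).ncard
      = (isoSet H).ncard + (sicSet H d).ncard := by
    rw [Set.ncard_union_eq (sicMin_iso_disjoint hd) (Set.toFinite _) (Set.toFinite _),
      sicMin_ncard]
  have hfin : (isoSet H ∪ sicMin H d).Finite := Set.toFinite _
  refine ⟨hfin.toFinset, ?_, ?_⟩
  · rw [← Set.ncard_eq_toFinset_card _ hfin, hcard_union]
  · rw [Set.Finite.coe_toFinset]
    exact zf_reach_univ hint hd _ _ (le_refl _) (le_refl _)

open scoped Classical in
lemma maxNullity_ge {F : Type*} [Field F] {n d : ℕ} (hd : 3 ≤ d)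
    {H : ZFHypergraph (Fin n)} (hint : IsIntervalHG H d) :
    (isoSet H).ncard + (sicSet H d).ncard ≤ hmNullity F (indMat F H d) := by
  have hA := indMat_inSFam (F := F) hint hd
  have hfin : (isoSet H ∪ sicMin H d).Finite := Set.toFinite _
  set Tf := hfin.toFinset with hTf
  have hmemTf : ∀ t : Fin n, t ∈ Tf ↔ t ∈ isoSet H ∪ sicMin H d := by
    intro t; rw [hTf, Set.Finite.mem_toFinset]
  have hfam : ∀ t : {t : Fin n // t ∈ Tf}, ∃ y : Fin n → F,
      y ∈ nullSpace (indMat F H d) ∧ y t.val = 1 ∧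
      ∀ t' : Fin n, t' ∈ Tf → t' ≠ t.val → y t' = 0 := by
    rintro ⟨t, ht⟩
    rcases (hmemTf t).1 ht with hiso | hmin
    · refine ⟨Pi.single t 1, single_mem_null hd hA hiso, Pi.single_eq_same t 1, ?_⟩
      intro t' _ hne
      exact Pi.single_eq_of_ne hne 1
    · obtain ⟨U, hU, htU, hminU⟩ := hmin
      have hUsic := hU
      obtain ⟨⟨v0, hcomp⟩, a, s, hs, hval, hiff⟩ := hU
      have hta : t.val = a := by
        have h1 := ((mem_of_val_image hval).1 htU).1
        have h2 : ∃ x ∈ U, x.val = a := by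
          have : a ∈ Fin.val '' U := by rw [hval]; exact ⟨le_refl _, by omega⟩
          obtain ⟨x, hx, hxa⟩ := this
          exact ⟨x, hx, hxa⟩
        obtain ⟨x, hxU, hxa⟩ := h2
        have := hminU x hxU
        omega
      refine ⟨jointVec F n a s d,
        jointVec_mem_null hd hint hcomp hs hval hiff,
        by rw [jointVec_joint (F := F) (by omega) (Nat.zero_le s)
          (show t.val = a + 0 * d by omega), pow_zero], ?_⟩
      intro t' ht' hne
      by_contra hne0
      obtain ⟨m, hmns, ht'val⟩ := jointVec_ne_zero (by omega) hne0
      have hmd : m * d ≤ s * d := muld_le hmns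
      have ht'U : t' ∈ U := (mem_of_val_image hval).2 ⟨by omega, by omega⟩
      rcases (hmemTf t').1 ht' with hiso' | hmin'
      · exact si_not_isolated hd hUsic ht'U hiso'
      · obtain ⟨U', hU', ht'U', hminU'⟩ := hmin'
        have : U = U' := sic_eq_of_mem hUsic hU' ht'U ht'U'
        subst this
        exact hne (Fin.ext (le_antisymm (hminU' t htU) (hminU t' ht'U')))
  choose y hy1 hy2 hy3 using hfam
  have hli : LinearIndependent F
      (fun t : {t : Fin n // t ∈ Tf} => (⟨y t, hy1 t⟩ : nullSpace (indMat F H d))) := by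
    rw [Fintype.linearIndependent_iff]
    intro c hc t0
    have hc' : ∑ t, c t • y t = 0 := by
      have h0 := congrArg (Subtype.val) hc
      simpa using h0
    have heval := congrFun hc' t0.val
    simp only [Finset.sum_apply, Pi.smul_apply, smul_eq_mul, Pi.zero_apply] at heval
    rw [Finset.sum_eq_single_of_mem t0 (Finset.mem_univ _)
      (fun t _ hne => by
        rw [hy3 t t0.val t0.2 (fun hcontra => hne (Subtype.ext hcontra).symm),
          mul_zero]),
      hy2 t0, mul_one] at heval
    exact heval
  have hcardle := hli.fintype_card_le_finrank
  rw [hmNullity]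
  calc (isoSet H).ncard + (sicSet H d).ncard
      = (isoSet H ∪ sicMin H d).ncard := by
        rw [Set.ncard_union_eq (sicMin_iso_disjoint hd) (Set.toFinite _)
          (Set.toFinite _), sicMin_ncard]
    _ = Tf.card := (Set.ncard_eq_toFinset_card _ hfin)
    _ = Fintype.card {t : Fin n // t ∈ Tf} := (Fintype.card_coe Tf).symm
    _ ≤ Module.finrank F (nullSpace (indMat F H d)) := hcardle

theorem maxNullity_eq {F : Type*} [Field F] {n d : ℕ} (hd : 3 ≤ d)
    {H : ZFHypergraph (Fin n)} (hint : IsIntervalHG H d) :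
    maxNullity F d H = (isoSet H).ncard + (sicSet H d).ncard := by
  obtain ⟨B0, hB0card, hB0zf⟩ := exists_zf_finset hd hint
  apply le_antisymm
  · apply csSup_le
    · exact ⟨hmNullity F (indMat F H d), indMat F H d, indMat_inSFam hint hd, rfl⟩
    · rintro k ⟨A, hA, rfl⟩
      calc hmNullity F A ≤ B0.card := nullity_le_zf hd hA hB0zf
      _ = _ := hB0card
  · have h1 := maxNullity_ge (F := F) hd hint
    refine le_trans h1 (le_csSup ?_ ⟨indMat F H d, indMat_inSFam hint hd, rfl⟩)
    refine ⟨n, ?_⟩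
    rintro k ⟨A, hA, rfl⟩
    calc hmNullity F A ≤ Module.finrank F (Fin n → F) := Submodule.finrank_le _
    _ = n := by rw [Module.finrank_pi F, Fintype.card_fin]

theorem stmt12 (F : Type*) [Field F] {n d : ℕ} (hd : 3 ≤ d)
    (H : ZFHypergraph (Fin n)) (hint : IsIntervalHG H d) :
    maxNullity F d H =
        Set.ncard {v : Fin n | H.IsIsolated v} +
        Set.ncard {U : Set (Fin n) | (∃ v : Fin n, U = componentSet H v) ∧
          IsSIComponent H d U} ∧
    Z0 H d =
        Set.ncard {v : Fin n | H.IsIsolated v} +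
        Set.ncard {U : Set (Fin n) | (∃ v : Fin n, U = componentSet H v) ∧
          IsSIComponent H d U} := by
  constructor
  · exact maxNullity_eq hd hint
  · exact Z0_eq hd hint
end
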